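/- arXiv:2305.19661 — 2 statements merged into one kernel-verified Lean document; each statement's English description precedes it below -/
import Mathlib

section
/- Let Γ = X_a(m,n,S,ℓ) satisfy Assumption A. Then 2k_i² = ±2 holds in ℤ_n for all i ∈ ℤ_m. Moreover, if 2ℓ ≠ 0 in ℤ_n, then 2k_i² = 2 holds for all i ∈ ℤ_m. -/
namespace CubicFIG

open SimpleGraph

variable {V : Type*}

/-- `f` is an automorphism of the graph `Γ`. -/
def IsAut (Γ : SimpleGraph V) (f : Equiv.Perm V) : Prop :=
  ∀ u v : V, Γ.Adj (f u) (f v) ↔ Γ.Adj u v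

/-- `f` preserves (the edge set of) the subgraph `H` (e.g. a 2-factor). -/
def Preserves (H : SimpleGraph V) (f : Equiv.Perm V) : Prop :=
  ∀ u v : V, H.Adj u v → H.Adj (f u) (f v)

/-- `Γ` is vertex-transitive. -/
def IsVertexTransitive (Γ : SimpleGraph V) : Prop :=
  ∀ u v : V, ∃ f : Equiv.Perm V, IsAut Γ f ∧ f u = v

/-- `Γ` is cubic. -/
def IsCubic (Γ : SimpleGraph V) : Prop := ∀ v : V, (Γ.neighborSet v).ncard = 3

/-- The edge set of `Γ` is partitioned into the 2-factor `H` (a spanning 2-regular subgraph,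
whose cycles are the connected components of `H`) and a 1-factor (the remaining edges,
which form a perfect matching). -/
def FactorPartition (Γ H : SimpleGraph V) : Prop :=
  H ≤ Γ ∧ (∀ v : V, (H.neighborSet v).ncard = 2) ∧
    (∀ v : V, {w : V | Γ.Adj v w ∧ ¬ H.Adj v w}.ncard = 1)

/-- The quotient graph `Γ_C` of `Γ` with respect to the 2-factor `H`: its vertices are the
cycles of the 2-factor, i.e. the connected components of `H`, two of them being adjacent iff
some vertex of one is `Γ`-adjacent to some vertex of the other. -/
def quotientGraph (Γ H : SimpleGraph V) : SimpleGraph H.ConnectedComponent :=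
  SimpleGraph.fromRel fun c d =>
    ∃ u v : V, Γ.Adj u v ∧ H.connectedComponentMk u = c ∧ H.connectedComponentMk v = d

/-- A graph is a cycle iff it is finite, connected and 2-regular. -/
def IsCycleGraph {W : Type*} (G : SimpleGraph W) : Prop :=
  Finite W ∧ G.Connected ∧ ∀ w : W, (G.neighborSet w).ncard = 2

/-- `Γ` is of alternating cycle quotient type with respect to the 2-factor `H`:
the edge set of `Γ` is partitioned into the 2-factor `H` and a 1-factor, the quotient
graph is a cycle, and any two vertices adjacent along a common cycle of the 2-factor
have their outside neighbors in distinct cycles of the 2-factor. -/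
def AltCQT (Γ H : SimpleGraph V) : Prop :=
  IsCubic Γ ∧ FactorPartition Γ H ∧ IsCycleGraph (quotientGraph Γ H) ∧
  ∀ ⦃u v u' v' : V⦄, H.Adj u v → Γ.Adj u u' → ¬ H.Adj u u' → Γ.Adj v v' → ¬ H.Adj v v' →
    H.connectedComponentMk u' ≠ H.connectedComponentMk v'

/-- The relation giving the cycle ("non-link") edges of `X_a(m,n,S,ℓ)`:
`v_{i,j} ∼ v_{i,j+a_i}, v_{i,j+b_i}` for `j ≡ i (mod 2)`. -/
def XaCycleRel (m n : ℕ) (a b : ZMod m → ZMod n) (u v : ZMod m × ZMod n) : Prop :=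
  u.2.val % 2 = u.1.val % 2 ∧ u.1 = v.1 ∧ (v.2 = u.2 + a u.1 ∨ v.2 = u.2 + b u.1)

/-- The relation giving the "link" edges of `X_a(m,n,S,ℓ)`:
`v_{i,j} ∼ v_{i+1,j}` for `0 ≤ i ≤ m-2`, `j ≡ i (mod 2)`, and
`v_{m-1,j} ∼ v_{0,j+ℓ}` for `j ≡ m-1 (mod 2)`. -/
def XaLinkRel (m n : ℕ) (ℓ : ZMod n) (u v : ZMod m × ZMod n) : Prop :=
  (u.2.val % 2 = u.1.val % 2 ∧ u.1.val ≤ m - 2 ∧ v.1 = u.1 + 1 ∧ v.2 = u.2) ∨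
  (u.2.val % 2 = (m - 1) % 2 ∧ u.1 = ((m - 1 : ℕ) : ZMod m) ∧ v.1 = 0 ∧ v.2 = u.2 + ℓ)

/-- The graph `X_a(m,n,S,ℓ)` with signature `S = [{a 0, b 0},…,{a (m-1), b (m-1)}]`. -/
def XaGraph (m n : ℕ) (a b : ZMod m → ZMod n) (ℓ : ZMod n) : SimpleGraph (ZMod m × ZMod n) :=
  SimpleGraph.fromRel fun u v => XaCycleRel m n a b u v ∨ XaLinkRel m n ℓ u v

/-- The 2-factor of `X_a(m,n,S,ℓ)` consisting of the `m` cycles `C_i` induced on the sets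
`V_i` (its edges are the non-links). -/
def XaFactor (m n : ℕ) (a b : ZMod m → ZMod n) : SimpleGraph (ZMod m × ZMod n) :=
  SimpleGraph.fromRel (XaCycleRel m n a b)

/-- Admissibility of the parameters of `X_a(m,n,S,ℓ)`: `m ≥ 3`, `n ≥ 4` even, `ℓ` of the
same parity as `m`, `a 0 = 1`, `b 0 = -1`, and all the `a i, b i` distinct and odd with
`gcd(b i - a i, n) = 2`. -/
def Admissible (m n : ℕ) (a b : ZMod m → ZMod n) (ℓ : ZMod n) : Prop :=
  3 ≤ m ∧ 4 ≤ n ∧ n % 2 = 0 ∧ ℓ.val % 2 = m % 2 ∧ a 0 = 1 ∧ b 0 = -1 ∧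
    ∀ i : ZMod m, a i ≠ b i ∧ (a i).val % 2 = 1 ∧ (b i).val % 2 = 1 ∧
      Nat.gcd (b i - a i).val n = 2

/-- The honeycomb toroidal graph `HTG(m,n,ℓ)`: the graph `X_a(m,n,S,ℓ)` whose signature
consists of `m` copies of `{-1,1}`. -/
def HTG (m n : ℕ) (ℓ : ZMod n) : SimpleGraph (ZMod m × ZMod n) :=
  XaGraph m n (fun _ => 1) (fun _ => -1) ℓ

/-- The signature `[1,k,1,k,…,1,k]`. -/
def kSig (m n : ℕ) (k : ZMod n) : ZMod m → ZMod n :=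
  fun i => if i.val % 2 = 0 then 1 else k

/-- The graph `X_a(m,n,k,ℓ)`, i.e. `X_a(m,n,S,ℓ)` with signature `S = [1,k,1,k,…,1,k]`. -/
def XaK (m n : ℕ) (k ℓ : ZMod n) : SimpleGraph (ZMod m × ZMod n) :=
  XaGraph m n (kSig m n k) (fun i => -(kSig m n k i)) ℓ

/-- The 2-factor of `X_a(m,n,k,ℓ)` consisting of the `m` cycles `C_i`. -/
def XaKFactor (m n : ℕ) (k : ZMod n) : SimpleGraph (ZMod m × ZMod n) :=
  XaFactor m n (kSig m n k) (fun i => -(kSig m n k i))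

/-- Assumption A: `Γ = X_a(m,n,S,ℓ)` with `m ≥ 3`, `n ≥ 6` even, `ℓ` of the same parity as
`m`, signature `S = [k 0, …, k (m-1)]` (that is, `{a i, b i} = {k i, -(k i)}`) with `k 0 = 1`
and each `k i` coprime to `n`, admitting a vertex-transitive subgroup of `Aut(Γ)` preserving
the 2-factor consisting of the cycles `C_i`. -/
def AssumptionA (m n : ℕ) (k : ZMod m → ZMod n) (ℓ : ZMod n) : Prop :=
  3 ≤ m ∧ 6 ≤ n ∧ n % 2 = 0 ∧ ℓ.val % 2 = m % 2 ∧ k 0 = 1 ∧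
  (∀ i : ZMod m, Nat.Coprime (k i).val n) ∧
  ∃ G : Subgroup (Equiv.Perm (ZMod m × ZMod n)),
    (∀ g ∈ G, IsAut (XaGraph m n k (fun i => -(k i)) ℓ) g) ∧
    (∀ g ∈ G, Preserves (XaFactor m n k (fun i => -(k i))) g) ∧
    ∀ u v : ZMod m × ZMod n, ∃ g ∈ G, g u = v

/-- Condition (II): `m ≥ 4` and `n ≥ 6` even, `ℓ ∈ ℤ_n` even, `k ∈ ℤ_n` odd with
`gcd(k,n) = 1`, `2k ≠ ±2`, `2k² = ±2`, and (writing `n = 2n'`) either `ℓk = ±ℓ` and at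
least one of `k² = ±1` and `4 ∣ m` holds, or `ℓk = n' ± ℓ`, `m ≡ 2 (mod 4)` and
`k² = n' ± 1`. -/
def CondII (m n : ℕ) (k ℓ : ZMod n) : Prop :=
  4 ≤ m ∧ m % 2 = 0 ∧ 6 ≤ n ∧ n % 2 = 0 ∧ ℓ.val % 2 = 0 ∧ k.val % 2 = 1 ∧
  Nat.Coprime k.val n ∧ 2 * k ≠ 2 ∧ 2 * k ≠ -2 ∧ (2 * k ^ 2 = 2 ∨ 2 * k ^ 2 = -2) ∧
  (((ℓ * k = ℓ ∨ ℓ * k = -ℓ) ∧ ((k ^ 2 = 1 ∨ k ^ 2 = -1) ∨ m % 4 = 0)) ∨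
   ((ℓ * k = (↑(n / 2) : ZMod n) + ℓ ∨ ℓ * k = (↑(n / 2) : ZMod n) - ℓ) ∧ m % 4 = 2 ∧
     (k ^ 2 = (↑(n / 2) : ZMod n) + 1 ∨ k ^ 2 = (↑(n / 2) : ZMod n) - 1)))

/-- `Γ` (with distinguished 2-factor `H`, whose edges are the non-links) has a 10-cycle
whose code (the cyclic 0/1 sequence recording links (0) and non-links (1), up to rotation
and reflection) is given by `c`. -/
def HasTenCycleWithCode (Γ H : SimpleGraph V) (c : ZMod 10 → Prop) : Prop :=
  ∃ v : ZMod 10 → V, Function.Injective v ∧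
    ∀ j : ZMod 10, Γ.Adj (v j) (v (j + 1)) ∧ (H.Adj (v j) (v (j + 1)) ↔ c j)

/-- The code `1⁶01²0` of 10-cycles of type 2. -/
def type2Code : ZMod 10 → Prop := fun j => j.val ≠ 6 ∧ j.val ≠ 9

/-- The code `1³0101010` of 10-cycles of type 3. -/
def type3Code : ZMod 10 → Prop :=
  fun j => j.val = 0 ∨ j.val = 1 ∨ j.val = 2 ∨ j.val = 4 ∨ j.val = 6 ∨ j.val = 8

/-- `Γ` is 2-arc-regular: the automorphism group acts regularly on 2-arcs. -/
def TwoArcRegular (Γ : SimpleGraph V) : Prop :=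
  ∀ ⦃v0 v1 v2 w0 w1 w2 : V⦄, Γ.Adj v0 v1 → Γ.Adj v1 v2 → v0 ≠ v2 →
    Γ.Adj w0 w1 → Γ.Adj w1 w2 → w0 ≠ w2 →
    ∃! f : Equiv.Perm V, IsAut Γ f ∧ f v0 = w0 ∧ f v1 = w1 ∧ f v2 = w2


private def par {N : ℕ} (x : ZMod N) : ZMod 2 := (x.val : ZMod 2)

private lemma par_castHom {n : ℕ} [NeZero n] (h2 : (2:ℕ) ∣ n) (x : ZMod n) :
    par x = ZMod.castHom h2 (ZMod 2) x :=
  (ZMod.natCast_val x).trans (ZMod.castHom_apply x).symm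

private lemma par_add {n : ℕ} [NeZero n] (h2 : (2:ℕ) ∣ n) (x y : ZMod n) :
    par (x + y) = par x + par y := by
  rw [par_castHom h2, par_castHom h2, par_castHom h2, map_add]

private lemma par_mul {n : ℕ} [NeZero n] (h2 : (2:ℕ) ∣ n) (x y : ZMod n) :
    par (x * y) = par x * par y := by
  rw [par_castHom h2, par_castHom h2, par_castHom h2, map_mul]

private lemma par_zero (N : ℕ) : par (0 : ZMod N) = 0 := by
  simp [par, ZMod.val_zero]

private lemma par_one {n : ℕ} [NeZero n] (h2 : (2:ℕ) ∣ n) : par (1 : ZMod n) = 1 := by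
  rw [par_castHom h2, map_one]

private lemma parity_iff (a b : ℕ) :
    a % 2 = b % 2 ↔ ((a : ZMod 2)) = (b : ZMod 2) :=
  (ZMod.natCast_eq_natCast_iff' a b 2).symm

/-- the offset of the link edges out of cycle `s`. -/
private def off {n : ℕ} (m : ℕ) (ℓ : ZMod n) (s : ZMod m) : ZMod n :=
  if s = ((m - 1 : ℕ) : ZMod m) then ℓ else 0

/-- a canonical vertex of `C s` carrying an "up" link. -/
private def pUp {m n : ℕ} (s : ZMod m) : ZMod n := if s.val % 2 = 0 then 0 else 1

private lemma par_pUp {m n : ℕ} [Fact (1 < n)] [NeZero n] (h2 : (2:ℕ) ∣ n) (s : ZMod m) :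
    par (pUp s : ZMod n) = par s := by
  rcases Nat.mod_two_eq_zero_or_one s.val with h | h
  · rw [pUp, if_pos h, par_zero]
    show (0 : ZMod 2) = (s.val : ZMod 2)
    rw [show ((0:ZMod 2)) = ((0:ℕ) : ZMod 2) by norm_num, ← parity_iff]; omega
  · rw [pUp, if_neg (by omega)]
    show ((1 : ZMod n).val : ZMod 2) = (s.val : ZMod 2)
    rw [ZMod.val_one, ← parity_iff]; omega

/-- the key parity identity for successors in `ZMod m`. -/
private lemma par_key {m n : ℕ} [NeZero m] [NeZero n] (hm : 3 ≤ m) (h2 : (2:ℕ) ∣ n)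
    {ℓ : ZMod n} (hl : ℓ.val % 2 = m % 2) (x : ZMod m) :
    par (x + 1) = par x + 1 + par (off m ℓ x) := by
  by_cases hx : x = ((m - 1 : ℕ) : ZMod m)
  · have hx1 : x + 1 = 0 := by
      rw [hx, show ((m - 1 : ℕ) : ZMod m) + 1 = ((m - 1 + 1 : ℕ) : ZMod m) by push_cast; ring,
        show m - 1 + 1 = m by omega, ZMod.natCast_self]
    have hval : x.val = m - 1 := by rw [hx, ZMod.val_natCast, Nat.mod_eq_of_lt (by omega)]
    have hoff : off m ℓ x = ℓ := by rw [off, if_pos hx]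
    rw [hx1, par_zero, hoff]
    show (0 : ZMod 2) = (x.val : ZMod 2) + 1 + (ℓ.val : ZMod 2)
    rw [hval]
    have h1 : ((ℓ.val : ℕ) : ZMod 2) = ((m : ℕ) : ZMod 2) := by rw [← parity_iff]; omega
    rw [h1, show ((1 : ZMod 2)) = ((1:ℕ) : ZMod 2) by norm_num, ← Nat.cast_add, ← Nat.cast_add,
      show ((0:ZMod 2)) = ((0:ℕ) : ZMod 2) by norm_num, ← parity_iff]
    omega
  · have hvlt : x.val < m - 1 := by
      have h1 : x.val < m := ZMod.val_lt x
      have h3 : x.val ≠ m - 1 := by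
        intro h
        apply hx
        rw [← ZMod.natCast_rightInverse x, h]
      omega
    have hx1 : x + 1 = ((x.val + 1 : ℕ) : ZMod m) := by
      rw [Nat.cast_add, Nat.cast_one, ZMod.natCast_rightInverse x]
    have hoff : off m ℓ x = 0 := by rw [off, if_neg hx]
    rw [hx1, hoff, par_zero, add_zero]
    show (((x.val + 1 : ℕ) : ZMod m).val : ZMod 2) = (x.val : ZMod 2) + 1
    rw [ZMod.val_natCast, Nat.mod_eq_of_lt (by omega),
      show ((1 : ZMod 2)) = ((1:ℕ) : ZMod 2) by norm_num, ← Nat.cast_add]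


private lemma par_neg {n : ℕ} [NeZero n] (h2 : (2:ℕ) ∣ n) (x : ZMod n) :
    par (-x) = par x := by
  rw [par_castHom h2, par_castHom h2, map_neg]
  generalize (ZMod.castHom h2 (ZMod 2)) x = a
  revert a; decide

private lemma par_two {n : ℕ} [NeZero n] (h2 : (2:ℕ) ∣ n) : par (2 : ZMod n) = 0 := by
  rw [show (2 : ZMod n) = 1 + 1 by norm_num, par_add h2, par_one h2]
  decide

private lemma z2_ne {a b : ZMod 2} (h : a ≠ b) : a = b + 1 := by revert a b; decide

private lemma par_sub {n : ℕ} [NeZero n] (h2 : (2:ℕ) ∣ n) (x y : ZMod n) :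
    par (x - y) = par x + par y := by
  rw [par_castHom h2, par_castHom h2, par_castHom h2, map_sub]
  generalize (ZMod.castHom h2 (ZMod 2)) x = a
  generalize (ZMod.castHom h2 (ZMod 2)) y = b
  revert a b; decide

section Aux

variable {m n : ℕ} {k : ZMod m → ZMod n} {ℓ : ZMod n}

private lemma HAdj [NeZero n] [Fact (1 < n)] (h2 : (2:ℕ) ∣ n)
    (hunit : ∀ i, IsUnit (k i)) (hpk : ∀ i, par (k i) = 1)
    (u v : ZMod m × ZMod n) :
    (XaFactor m n k (fun i => -(k i))).Adj u v ↔
      v.1 = u.1 ∧ (v.2 = u.2 + k u.1 ∨ v.2 = u.2 - k u.1) := by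
  rw [XaFactor, SimpleGraph.fromRel_adj]
  constructor
  · rintro ⟨hne, ⟨hp, h1, hor⟩ | ⟨hp, h1, hor⟩⟩
    · refine ⟨h1.symm, ?_⟩
      rcases hor with h' | h'
      · exact Or.inl h'
      · exact Or.inr (by rw [h']; ring)
    · refine ⟨h1, ?_⟩
      rw [h1] at hor
      rcases hor with h' | h'
      · exact Or.inr (by rw [h']; ring)
      · exact Or.inl (by rw [h']; ring)
  · rintro ⟨h1, hor⟩
    have hku : k u.1 ≠ 0 := (hunit u.1).ne_zero
    constructor
    · intro he
      rw [← he] at hor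
      rcases hor with h' | h'
      · exact hku (by linear_combination -h')
      · exact hku (by linear_combination h')
    · by_cases hp : par u.2 = par u.1
      · left
        refine ⟨(parity_iff _ _).2 hp, h1.symm, ?_⟩
        rcases hor with h' | h'
        · exact Or.inl h'
        · exact Or.inr (by rw [h']; ring)
      · right
        have hp1 : par u.2 = par u.1 + 1 := z2_ne hp
        have hp2 : par v.2 = par v.1 := by
          rcases hor with h' | h' <;>
            rw [h1, h'] <;>
            [rw [par_add h2 u.2 (k u.1)]; rw [par_sub h2 u.2 (k u.1)]] <;>
            rw [hpk u.1, hp1] <;>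
            · generalize par u.1 = a; revert a; decide
        refine ⟨(parity_iff _ _).2 hp2, h1, ?_⟩
        rcases hor with h' | h'
        · exact Or.inr (by rw [h1, h']; ring)
        · exact Or.inl (by rw [h1, h']; ring)

private lemma linkIff [NeZero m] [NeZero n] (hm : 3 ≤ m) (u v : ZMod m × ZMod n) :
    XaLinkRel m n ℓ u v ↔ (par u.2 = par u.1 ∧ v.1 = u.1 + 1 ∧ v.2 = u.2 + off m ℓ u.1) := by
  have hv : ((m - 1 : ℕ) : ZMod m).val = m - 1 := by
    rw [ZMod.val_natCast, Nat.mod_eq_of_lt (by omega)]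
  have hm10 : ((m - 1 : ℕ) : ZMod m) + 1 = 0 := by
    rw [show ((m - 1 : ℕ) : ZMod m) + 1 = ((m - 1 + 1 : ℕ) : ZMod m) by push_cast; ring,
      show m - 1 + 1 = m by omega, ZMod.natCast_self]
  constructor
  · rintro (⟨hp, hle, h1, h2⟩ | ⟨hp, he, h1, h2⟩)
    · have hne : u.1 ≠ ((m - 1 : ℕ) : ZMod m) := by
        intro h; rw [h, hv] at hle; omega
      exact ⟨(parity_iff _ _).1 hp, h1, by rw [off, if_neg hne, add_zero]; exact h2⟩
    · refine ⟨?_, ?_, ?_⟩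
      · show ((u.2.val : ℕ) : ZMod 2) = ((u.1.val : ℕ) : ZMod 2)
        rw [← parity_iff, he, hv]
        omega
      · rw [h1, he, hm10]
      · rw [h2, off, if_pos he]
  · rintro ⟨hp, h1, h2⟩
    by_cases he : u.1 = ((m - 1 : ℕ) : ZMod m)
    · right
      refine ⟨?_, he, ?_, ?_⟩
      · have := (parity_iff u.2.val u.1.val).2 hp
        rw [he, hv] at this
        omega
      · rw [h1, he, hm10]
      · rw [h2, off, if_pos he]
    · left
      refine ⟨(parity_iff _ _).2 hp, ?_, h1, ?_⟩
      · have h3 : u.1.val ≠ m - 1 := by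
          intro h
          apply he
          rw [← ZMod.natCast_rightInverse u.1, h]
        have := ZMod.val_lt u.1
        omega
      · rw [h2, off, if_neg he, add_zero]

end Aux

section Aux2

variable {m n : ℕ} {k : ZMod m → ZMod n} {ℓ : ZMod n}

/-- the link ("1-factor") adjacency in explicit form. -/
private def Lk (m n : ℕ) (ℓ : ZMod n) (u v : ZMod m × ZMod n) : Prop :=
  (par u.2 = par u.1 ∧ v.1 = u.1 + 1 ∧ v.2 = u.2 + off m ℓ u.1) ∨
  (par v.2 = par v.1 ∧ u.1 = v.1 + 1 ∧ u.2 = v.2 + off m ℓ v.1)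

private lemma LkAdj [NeZero m] [NeZero n] [Fact (1 < n)] (hm : 3 ≤ m) (h2 : (2:ℕ) ∣ n)
    (hunit : ∀ i, IsUnit (k i)) (hpk : ∀ i, par (k i) = 1) (u v : ZMod m × ZMod n) :
    ((XaGraph m n k (fun i => -(k i)) ℓ).Adj u v ∧
      ¬ (XaFactor m n k (fun i => -(k i))).Adj u v) ↔ Lk m n ℓ u v := by
  have hone : (1 : ZMod m) ≠ 0 := by
    intro h
    rw [show (1 : ZMod m) = ((1:ℕ) : ZMod m) by norm_num,
      ZMod.natCast_eq_zero_iff] at h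
    have := Nat.le_of_dvd one_pos h
    omega
  have hLk : Lk m n ℓ u v ↔ (XaLinkRel m n ℓ u v ∨ XaLinkRel m n ℓ v u) := by
    rw [Lk, linkIff hm u v, linkIff hm v u]
  rw [XaGraph, SimpleGraph.fromRel_adj, XaFactor, SimpleGraph.fromRel_adj, hLk]
  constructor
  · rintro ⟨⟨hne, hor⟩, hnH⟩
    rcases hor with (h | h) | (h | h)
    · exact absurd ⟨hne, Or.inl h⟩ hnH
    · exact Or.inl h
    · exact absurd ⟨hne, Or.inr h⟩ hnH
    · exact Or.inr h
  · intro h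
    have hf : v.1 = u.1 + 1 ∨ u.1 = v.1 + 1 := by
      rcases h with h' | h'
      · exact Or.inl ((linkIff hm u v).1 h').2.1
      · exact Or.inr ((linkIff hm v u).1 h').2.1
    have hne : u ≠ v := by
      intro he
      rcases hf with h' | h' <;> rw [he] at h' <;> exact hone (by linear_combination -h')
    have hnotC : ¬ (XaCycleRel m n k (fun i => -(k i)) u v ∨
        XaCycleRel m n k (fun i => -(k i)) v u) := by
      rintro (hc | hc)
      · have h1 : u.1 = v.1 := hc.2.1
        rcases hf with h' | h'
        · exact hone (by linear_combination - h' - h1)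
        · exact hone (by linear_combination - h' + h1)
      · have h1 : v.1 = u.1 := hc.2.1
        rcases hf with h' | h'
        · exact hone (by linear_combination - h' + h1)
        · exact hone (by linear_combination - h' - h1)
    refine ⟨⟨hne, ?_⟩, fun hH => hnotC hH.2⟩
    rcases h with h' | h'
    · exact Or.inl (Or.inr h')
    · exact Or.inr (Or.inr h')

private lemma cycleStruct [NeZero n] [Fact (1 < n)] (hn : 6 ≤ n) (h2 : (2:ℕ) ∣ n)
    (hunit : ∀ i, IsUnit (k i)) (hpk : ∀ i, par (k i) = 1)
    (g : Equiv.Perm (ZMod m × ZMod n))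
    (hgp : ∀ u v, (XaFactor m n k (fun i => -(k i))).Adj u v →
      (XaFactor m n k (fun i => -(k i))).Adj (g u) (g v)) (s : ZMod m) :
    ∃ (t : ZMod m) (C D : ZMod n),
      (C = k t * (k s)⁻¹ ∨ C = -(k t * (k s)⁻¹)) ∧ ∀ j, g (s, j) = (t, C * j + D) := by
  have htwo : (2 : ZMod n) ≠ 0 := by
    intro h
    rw [show (2 : ZMod n) = ((2:ℕ) : ZMod n) by norm_num,
      ZMod.natCast_eq_zero_iff] at h
    have := Nat.le_of_dvd (by norm_num) h
    omega
  have hks : k s * (k s)⁻¹ = 1 := ZMod.mul_inv_of_unit _ (hunit s)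
  set w := g (s, (0 : ZMod n)) with hw
  have h0 : (XaFactor m n k (fun i => -(k i))).Adj (s, (0 : ZMod n)) (s, k s) :=
    (HAdj h2 hunit hpk _ _).mpr ⟨rfl, Or.inl (by ring)⟩
  have h1 := (HAdj h2 hunit hpk _ _).mp (hgp _ _ h0)
  obtain ⟨E, hE1, hE2⟩ : ∃ E : ZMod n, (E = k w.1 ∨ E = -(k w.1)) ∧
      g (s, k s) = (w.1, w.2 + E) := by
    rcases h1.2 with h | h
    · exact ⟨k w.1, Or.inl rfl, Prod.ext h1.1 h⟩
    · exact ⟨-(k w.1), Or.inr rfl, Prod.ext h1.1 (by rw [h]; ring)⟩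
  have hmain : ∀ ti : ℕ, g (s, ((ti : ℕ) : ZMod n) * k s) = (w.1, ((ti : ℕ) : ZMod n) * E + w.2)
      ∧ g (s, ((ti + 1 : ℕ) : ZMod n) * k s) = (w.1, ((ti + 1 : ℕ) : ZMod n) * E + w.2) := by
    intro ti
    induction ti with
    | zero =>
      constructor
      · simpa using hw.symm
      · simpa [add_comm] using hE2
    | succ ti ih =>
      refine ⟨ih.2, ?_⟩
      have hadj : (XaFactor m n k (fun i => -(k i))).Adj
          (s, ((ti + 1 : ℕ) : ZMod n) * k s) (s, ((ti + 1 + 1 : ℕ) : ZMod n) * k s) :=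
        (HAdj h2 hunit hpk _ _).mpr ⟨rfl, Or.inl (by push_cast; ring)⟩
      have h3 := (HAdj h2 hunit hpk _ _).mp (hgp _ _ hadj)
      rw [ih.2] at h3
      have hbad : (g (s, ((ti + 1 + 1 : ℕ) : ZMod n) * k s)).2
            = ((ti : ℕ) : ZMod n) * E + w.2 → False := by
        intro hopt
        have hXeq : g (s, ((ti + 1 + 1 : ℕ) : ZMod n) * k s)
            = g (s, ((ti : ℕ) : ZMod n) * k s) := by
          rw [ih.1]
          exact Prod.ext h3.1 hopt
        have hsnd := congrArg Prod.snd (g.injective hXeq)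
        simp only at hsnd
        have h2ks : 2 * k s = 0 := by push_cast at hsnd; linear_combination hsnd
        exact htwo (by linear_combination (k s)⁻¹ * h2ks - 2 * hks)
      rcases hE1 with hEc | hEc <;> rcases h3.2 with hopt | hopt
      · exact Prod.ext h3.1 (by rw [hopt, ← hEc]; push_cast; ring)
      · exact absurd (by rw [hopt, ← hEc]; push_cast; ring) hbad
      · exact absurd (by rw [hopt, show k w.1 = -E by rw [hEc]; ring]; push_cast; ring) hbad
      · exact Prod.ext h3.1 (by rw [hopt, show k w.1 = -E by rw [hEc]; ring]; push_cast; ring)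
  refine ⟨w.1, E * (k s)⁻¹, w.2, ?_, ?_⟩
  · rcases hE1 with h | h
    · exact Or.inl (by rw [h])
    · exact Or.inr (by rw [h]; ring)
  · intro j
    have hv : (((j * (k s)⁻¹).val : ℕ) : ZMod n) = j * (k s)⁻¹ :=
      ZMod.natCast_rightInverse (j * (k s)⁻¹)
    have h5 := (hmain ((j * (k s)⁻¹).val)).1
    rw [hv] at h5
    have hj : j * (k s)⁻¹ * k s = j := by linear_combination j * hks
    rw [hj] at h5
    rw [h5]
    exact Prod.ext rfl (by ring)

end Aux2

section Harvest

variable {m n : ℕ} {k : ZMod m → ZMod n} {ℓ : ZMod n}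

private lemma harvest (hm : 3 ≤ m) (hn : 6 ≤ n) (hev : n % 2 = 0) (hl : ℓ.val % 2 = m % 2)
    (hk0 : k 0 = 1) (hkc : ∀ i : ZMod m, Nat.Coprime (k i).val n)
    (G : Subgroup (Equiv.Perm (ZMod m × ZMod n)))
    (hGaut : ∀ g ∈ G, IsAut (XaGraph m n k (fun i => -(k i)) ℓ) g)
    (hGpres : ∀ g ∈ G, Preserves (XaFactor m n k (fun i => -(k i))) g)
    (hGtrans : ∀ u v : ZMod m × ZMod n, ∃ g ∈ G, g u = v) (i : ZMod m) :
    ∃ C : ZMod m → ZMod n,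
      (∀ s, C s = k (i - s) * (k s)⁻¹ ∨ C s = -(k (i - s) * (k s)⁻¹)) ∧
      (∀ s, 2 * C s = 2 * C 0) ∧ 2 * (C 0 * ℓ) + 2 * ℓ = 0 := by
  haveI : NeZero m := ⟨by omega⟩
  haveI : NeZero n := ⟨by omega⟩
  haveI : Fact (1 < n) := ⟨by omega⟩
  have h2 : (2:ℕ) ∣ n := Nat.dvd_of_mod_eq_zero hev
  have hunit : ∀ j : ZMod m, IsUnit (k j) := fun j => by
    have h := (ZMod.isUnit_iff_coprime (k j).val n).2 (hkc j)
    rwa [ZMod.natCast_rightInverse (k j)] at h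
  have hpk : ∀ j : ZMod m, par (k j) = 1 := fun j => by
    have hg1 : Nat.gcd (k j).val n = 1 := hkc j
    have hv : (k j).val % 2 = 1 % 2 := by
      rcases Nat.mod_two_eq_zero_or_one (k j).val with hq | hq
      · exfalso
        have hdd : (2:ℕ) ∣ Nat.gcd (k j).val n :=
          Nat.dvd_gcd (Nat.dvd_of_mod_eq_zero hq) h2
        omega
      · omega
    show ((k j).val : ZMod 2) = 1
    rw [show (1 : ZMod 2) = ((1:ℕ) : ZMod 2) by norm_num, ← parity_iff]
    omega
  have hpkinv : ∀ j : ZMod m, par ((k j)⁻¹) = 1 := fun j => by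
    have hks : k j * (k j)⁻¹ = 1 := ZMod.mul_inv_of_unit _ (hunit j)
    have h := congrArg par hks
    rwa [par_mul h2, hpk j, one_mul, par_one h2] at h
  set jstar : ZMod n := if i.val % 2 = 0 then 1 else 0 with hjstar
  obtain ⟨g, hgG, hgv⟩ := hGtrans (0, 0) (i, jstar)
  have hH2 : ∀ u v, (XaFactor m n k (fun i => -(k i))).Adj u v ↔
      (XaFactor m n k (fun i => -(k i))).Adj (g u) (g v) := fun u v =>
    ⟨fun h => hGpres g hgG u v h, fun h => by
      have h' := hGpres g⁻¹ (G.inv_mem hgG) _ _ h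
      simpa using h'⟩
  have hLk2 : ∀ u v, Lk m n ℓ u v → Lk m n ℓ (g u) (g v) := fun u v h => by
    rw [← LkAdj hm h2 hunit hpk] at h ⊢
    exact ⟨(hGaut g hgG u v).2 h.1, fun hH => h.2 ((hH2 u v).2 hH)⟩
  choose σ C D hC hgfun using
    fun s => cycleStruct hn h2 hunit hpk g (fun u v => (hH2 u v).1) s
  have parC : ∀ s, par (C s) = 1 := by
    intro s
    rcases hC s with h | h
    · rw [h, par_mul h2, hpk, hpkinv, one_mul]
    · rw [h, par_neg h2, par_mul h2, hpk, hpkinv, one_mul]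
  have hkey : ∀ x : ZMod m, par (x + 1) = par x + 1 + par (off m ℓ x) :=
    par_key hm h2 hl
  have htrans : ∀ (s : ZMod m) (j : ZMod n), par j = par s →
      (par (C s * j + D s) = par (σ s) ∧ σ (s + 1) = σ s + 1 ∧
        C (s+1) * (j + off m ℓ s) + D (s+1) = C s * j + D s + off m ℓ (σ s)) ∨
      (par (C (s+1) * (j + off m ℓ s) + D (s+1)) = par (σ (s+1)) ∧ σ s = σ (s+1) + 1 ∧
        C s * j + D s = C (s+1) * (j + off m ℓ s) + D (s+1) + off m ℓ (σ (s+1))) := by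
    intro s j hj
    have h := hLk2 (s, j) (s + 1, j + off m ℓ s) (Or.inl ⟨hj, rfl, rfl⟩)
    rw [hgfun s j, hgfun (s+1) (j + off m ℓ s)] at h
    exact h
  have himg : ∀ s (j : ZMod n), par (C s * j + D s) = par j + par (D s) := fun s j => by
    rw [par_add h2, par_mul h2, parC s, one_mul]
  have hcaseNeg : ∀ s, ¬ (par s + par (D s) = par (σ s)) →
      σ (s+1) = σ s - 1 ∧ ∀ j, par j = par s →
        C s * j + D s = C (s+1) * (j + off m ℓ s) + D (s+1) + off m ℓ (σ s - 1) := by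
    intro s hns
    have hpick : ∀ j, par j = par s → (σ s = σ (s+1) + 1 ∧
        C s * j + D s = C (s+1) * (j + off m ℓ s) + D (s+1) + off m ℓ (σ (s+1))) := by
      intro j hj
      rcases htrans s j hj with h | h
      · exfalso
        apply hns
        have h1 := h.1
        rwa [himg s j, hj] at h1
      · exact ⟨h.2.1, h.2.2⟩
    have hσ : σ (s+1) = σ s - 1 := by
      have h := (hpick (pUp s) (par_pUp h2 s)).1
      linear_combination -h
    refine ⟨hσ, fun j hj => ?_⟩
    have h := (hpick j hj).2
    rwa [hσ] at h
  have hPredNeg : ∀ s, ¬ (par s + par (D s) = par (σ s)) →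
      ¬ (par (s+1) + par (D (s+1)) = par (σ (s+1))) := by
    intro s hns hps1
    obtain ⟨hσ, hEq⟩ := hcaseNeg s hns
    have hE := hEq (pUp s) (par_pUp h2 s)
    have hpE := congrArg par hE
    simp only [par_add h2, par_mul h2, parC, one_mul, par_pUp h2 s] at hpE
    have hkx := hkey (σ s - 1)
    rw [sub_add_cancel] at hkx
    rw [hσ] at hps1
    revert hns hpE hps1 hkx
    have hkc' := hkey s
    revert hkc'
    generalize par s = a
    generalize par (D s) = d
    generalize par (off m ℓ s) = o
    generalize par (D (s+1)) = d'
    generalize par (off m ℓ (σ s - 1)) = o'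
    generalize par (σ s) = x
    generalize par (σ s - 1) = y
    generalize par (s+1) = c
    revert a d o d' o' x y c
    set_option synthInstance.maxSize 2000 in
    set_option synthInstance.maxHeartbeats 2000000 in
    decide
  -- the chain over all cycles
  have hg00 := (hgfun 0 0).symm.trans hgv
  have hσ0 : σ 0 = i := congrArg Prod.fst hg00
  have hD0 : D 0 = jstar := by
    have h := congrArg Prod.snd hg00
    simpa using h
  have hpari : par jstar = par i + 1 := by
    rcases Nat.mod_two_eq_zero_or_one i.val with hq | hq
    · have hpi : par i = 0 := by
        show ((i.val : ℕ) : ZMod 2) = 0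
        rw [show (0 : ZMod 2) = ((0:ℕ) : ZMod 2) by norm_num, ← parity_iff]
        omega
      rw [hjstar, if_pos hq, par_one h2, hpi]
      decide
    · have hpi : par i = 1 := by
        show ((i.val : ℕ) : ZMod 2) = 1
        rw [show (1 : ZMod 2) = ((1:ℕ) : ZMod 2) by norm_num, ← parity_iff]
        omega
      rw [hjstar, if_neg (by omega), par_zero, hpi]
      decide
  have hPred0 : ¬ (par (0 : ZMod m) + par (D 0) = par (σ 0)) := by
    rw [par_zero, hD0, hσ0, hpari, zero_add]
    generalize par i = a
    revert a; decide
  have hchain : ∀ t : ℕ, (¬ (par ((t:ℕ) : ZMod m) + par (D ((t : ℕ) : ZMod m))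
      = par (σ ((t:ℕ) : ZMod m)))) ∧ σ ((t:ℕ): ZMod m) = σ 0 - ((t:ℕ) : ZMod m) := by
    intro t
    induction t with
    | zero =>
      refine ⟨by simpa using hPred0, by simp⟩
    | succ t ih =>
      have hcast : ((t+1 : ℕ) : ZMod m) = ((t:ℕ) : ZMod m) + 1 := by push_cast; ring
      rw [hcast]
      refine ⟨hPredNeg _ ih.1, ?_⟩
      rw [(hcaseNeg _ ih.1).1, ih.2]
      push_cast
      ring
  have hall : ∀ s : ZMod m, (¬ (par s + par (D s) = par (σ s))) ∧ σ s = i - s := by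
    intro s
    have h := hchain s.val
    rw [ZMod.natCast_rightInverse s, hσ0] at h
    exact h
  have hEqall : ∀ s : ZMod m, ∀ j, par j = par s →
      C s * j + D s = C (s+1) * (j + off m ℓ s) + D (s+1) + off m ℓ (i - s - 1) := by
    intro s j hj
    have h := (hcaseNeg s (hall s).1).2 j hj
    rwa [(hall s).2] at h
  have h2C : ∀ s : ZMod m, 2 * C (s+1) = 2 * C s := by
    intro s
    have h1 := hEqall s (pUp s) (par_pUp h2 s)
    have h2' := hEqall s (pUp s + 2)
      (by rw [par_add h2, par_two h2, add_zero, par_pUp h2 s])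
    linear_combination h1 - h2'
  have h2C0 : ∀ s : ZMod m, 2 * C s = 2 * C 0 := by
    have hnat : ∀ t : ℕ, 2 * C ((t:ℕ) : ZMod m) = 2 * C 0 := by
      intro t
      induction t with
      | zero => norm_num
      | succ t ih =>
        rw [show ((t+1:ℕ) : ZMod m) = ((t:ℕ):ZMod m) + 1 by push_cast; ring, h2C, ih]
    intro s
    have h := hnat s.val
    rwa [ZMod.natCast_rightInverse s] at h
  have hCshape : ∀ s, C s = k (i - s) * (k s)⁻¹ ∨ C s = -(k (i - s) * (k s)⁻¹) := by
    intro s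
    have h := hC s
    rwa [(hall s).2] at h
  -- telescoping sum
  have hsum : ∑ s : ZMod m, (C s * pUp s + D s)
      = ∑ s : ZMod m, (C (s+1) * pUp s + (C (s+1) * off m ℓ s
        + (D (s+1) + off m ℓ (i - s - 1)))) := by
    refine Finset.sum_congr rfl fun s _ => ?_
    rw [hEqall s (pUp s) (par_pUp h2 s)]
    ring
  simp only [Finset.sum_add_distrib] at hsum
  have hs1 : ∑ s : ZMod m, D (s+1) = ∑ s : ZMod m, D s :=
    Fintype.sum_equiv (Equiv.addRight (1 : ZMod m)) _ _ (fun s => rfl)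
  have hs2 : ∑ s : ZMod m, off m ℓ (i - s - 1) = ∑ s : ZMod m, off m ℓ s :=
    Fintype.sum_equiv (Equiv.subLeft (i - 1)) _ _ (fun s => by
      rw [Equiv.subLeft_apply, sub_right_comm])
  have hs3 : ∑ s : ZMod m, off m ℓ s = ℓ := by
    rw [show (∑ s : ZMod m, off m ℓ s)
      = ∑ s : ZMod m, if s = ((m-1:ℕ):ZMod m) then ℓ else 0 from rfl,
      Finset.sum_ite_eq' Finset.univ ((m-1:ℕ):ZMod m) (fun _ => ℓ)]
    simp
  have hc1 : ((m - 1 : ℕ) : ZMod m) + 1 = 0 := by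
    rw [show ((m - 1 : ℕ) : ZMod m) + 1 = ((m - 1 + 1 : ℕ) : ZMod m) by push_cast; ring,
      show m - 1 + 1 = m by omega, ZMod.natCast_self]
  have hs4 : ∑ s : ZMod m, C (s+1) * off m ℓ s = C 0 * ℓ := by
    rw [show (∑ s : ZMod m, C (s+1) * off m ℓ s)
      = ∑ s : ZMod m, if s = ((m-1:ℕ):ZMod m) then C (s+1) * ℓ else 0 from
        Finset.sum_congr rfl fun s _ => by rw [off]; split_ifs <;> simp,
      Finset.sum_ite_eq' Finset.univ ((m-1:ℕ):ZMod m) (fun s => C (s+1) * ℓ)]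
    simp [hc1]
  have htele : (∑ s : ZMod m, C s * pUp s) - ∑ s : ZMod m, C (s+1) * pUp s
      = C 0 * ℓ + ℓ := by
    rw [hs1, hs2, hs3, hs4] at hsum
    linear_combination hsum
  have hzero : (2:ZMod n) * (∑ s : ZMod m, C s * pUp s)
      - 2 * (∑ s : ZMod m, C (s+1) * pUp s) = 0 := by
    rw [Finset.mul_sum, Finset.mul_sum, ← Finset.sum_sub_distrib]
    refine Finset.sum_eq_zero fun s _ => ?_
    have ha := h2C0 s
    have hb := h2C0 (s+1)
    linear_combination pUp s * ha - pUp s * hb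
  exact ⟨C, hCshape, h2C0, by linear_combination hzero - 2 * htele⟩

end Harvest

/-- `2k_i² = ±2` always, and `2k_i² = 2` when `2ℓ ≠ 0`. -/
theorem statement6 (m n : ℕ) (k : ZMod m → ZMod n) (ℓ : ZMod n)
    (hA : AssumptionA m n k ℓ) :
    (∀ i : ZMod m, 2 * (k i) ^ 2 = 2 ∨ 2 * (k i) ^ 2 = -2) ∧
    (2 * ℓ ≠ 0 → ∀ i : ZMod m, 2 * (k i) ^ 2 = 2) := by
  obtain ⟨hm, hn, hev, hl, hk0, hkc, G, hGaut, hGpres, hGtrans⟩ := hA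
  haveI : NeZero m := ⟨by omega⟩
  haveI : NeZero n := ⟨by omega⟩
  have h2 : (2:ℕ) ∣ n := Nat.dvd_of_mod_eq_zero hev
  have hunit : ∀ j : ZMod m, IsUnit (k j) := fun j => by
    have h := (ZMod.isUnit_iff_coprime (k j).val n).2 (hkc j)
    rwa [ZMod.natCast_rightInverse (k j)] at h
  have hkinv : ∀ j : ZMod m, k j * (k j)⁻¹ = 1 :=
    fun j => ZMod.mul_inv_of_unit _ (hunit j)
  have hC00 : ∀ i : ZMod m, ∀ C : ZMod m → ZMod n,
      (∀ s, C s = k (i - s) * (k s)⁻¹ ∨ C s = -(k (i - s) * (k s)⁻¹)) →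
      (C 0 = k i ∨ C 0 = -(k i)) := by
    intro i C hsh
    have h := hsh 0
    rw [sub_zero, hk0, ZMod.inv_one, mul_one] at h
    exact h
  have part1 : ∀ i : ZMod m, 2 * (k i) ^ 2 = 2 ∨ 2 * (k i) ^ 2 = -2 := by
    intro i
    obtain ⟨C, hsh, h2C, -⟩ := harvest hm hn hev hl hk0 hkc G hGaut hGpres hGtrans i
    have hCi := hsh i
    rw [sub_self, hk0, one_mul] at hCi
    have h2Ci := h2C i
    have hki := hkinv i
    rcases hCi with h1 | h1 <;> rcases hC00 i C hsh with h0 | h0 <;> rw [h1, h0] at h2Ci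
    · left; linear_combination 2 * hki - (k i) * h2Ci
    · right; linear_combination (k i) * h2Ci - 2 * hki
    · right; linear_combination (-(k i)) * h2Ci - 2 * hki
    · left; linear_combination (k i) * h2Ci + 2 * hki
  refine ⟨part1, ?_⟩
  intro h2l i
  rcases part1 i with hgood | hbad
  · exact hgood
  exfalso
  obtain ⟨C, hsh, h2C, htel⟩ := harvest hm hn hev hl hk0 hkc G hGaut hGpres hGtrans i
  -- the relation 2ℓk = ±2ℓ
  have hR2 : 2 * ℓ * k i = 2 * ℓ ∨ 2 * ℓ * k i = -(2 * ℓ) := by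
    rcases hC00 i C hsh with h | h <;> rw [h] at htel
    · right; linear_combination htel
    · left; linear_combination -htel
  have h4l : (4 : ZMod n) * ℓ = 0 := by
    rcases hR2 with h | h
    · linear_combination ℓ * hbad - (k i) * h - h
    · linear_combination ℓ * hbad - (k i) * h + h
  -- arithmetic consequences
  have hℓv : ((ℓ.val : ℕ) : ZMod n) = ℓ := ZMod.natCast_rightInverse ℓ
  have hxval : ((2 * ℓ.val : ℕ) : ZMod n) = 2 * ℓ := by
    rw [Nat.cast_mul, hℓv, Nat.cast_ofNat]
  have hxv : (2 * ℓ : ZMod n).val = (2 * ℓ.val) % n := by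
    rw [← hxval, ZMod.val_natCast]
  have hdvd : n ∣ 2 * (2 * ℓ : ZMod n).val := by
    have hq : ((2 * (2 * ℓ : ZMod n).val : ℕ) : ZMod n) = 0 := by
      have hxv' : (((2 * ℓ : ZMod n).val : ℕ) : ZMod n) = 2 * ℓ :=
        ZMod.natCast_rightInverse (2 * ℓ)
      rw [Nat.cast_mul, hxv', Nat.cast_ofNat]
      linear_combination h4l
    exact (ZMod.natCast_eq_zero_iff _ _).1 hq
  have hxlt : (2 * ℓ : ZMod n).val < n := ZMod.val_lt _
  have hxpos : (2 * ℓ : ZMod n).val ≠ 0 := by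
    intro h
    apply h2l
    rw [← ZMod.natCast_rightInverse (2 * ℓ : ZMod n), h]
    norm_num
  have h2xn : 2 * (2 * ℓ : ZMod n).val = n := by
    obtain ⟨c, hc⟩ := hdvd
    rcases c with _ | _ | c
    · omega
    · omega
    · exfalso
      have : n * 2 ≤ n * (c + 1 + 1) := Nat.mul_le_mul_left n (by omega)
      omega
  have hxeven : 2 ∣ (2 * ℓ : ZMod n).val := by
    rw [hxv]
    exact (Nat.dvd_mod_iff h2).2 ⟨ℓ.val, by ring⟩
  have h4n : (4:ℕ) ∣ n := by
    obtain ⟨c, hc⟩ := hxeven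
    exact ⟨c, by omega⟩
  have h8n : ¬ ((8:ℕ) ∣ n) := by
    intro h8
    have hKodd : (k i).val % 2 = 1 := by
      have hg1 : Nat.gcd (k i).val n = 1 := hkc i
      rcases Nat.mod_two_eq_zero_or_one (k i).val with hq | hq
      · exfalso
        have := Nat.dvd_gcd (Nat.dvd_of_mod_eq_zero hq) h2
        omega
      · exact hq
    have hcast : ((2 * (k i).val ^ 2 + 2 : ℕ) : ZMod n) = 0 := by
      have hKc : (((k i).val : ℕ) : ZMod n) = k i := ZMod.natCast_rightInverse (k i)
      push_cast [hKc]
      linear_combination hbad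
    have hdvd2 : n ∣ 2 * (k i).val ^ 2 + 2 :=
      (ZMod.natCast_eq_zero_iff _ _).1 hcast
    obtain ⟨a, ha⟩ : ∃ a, (k i).val = 2 * a + 1 := ⟨(k i).val / 2, by omega⟩
    have hval2 : 2 * (k i).val ^ 2 + 2 = 4 * (2 * (a * a) + 2 * a + 1) := by
      rw [ha]; ring
    have h84 : (8:ℕ) ∣ 4 * (2 * (a * a) + 2 * a + 1) := by
      rw [← hval2]
      exact dvd_trans h8 hdvd2
    obtain ⟨e, he⟩ := h84
    omega
  have hlodd : ℓ.val % 2 = 1 := by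
    rcases Nat.mod_two_eq_zero_or_one ℓ.val with hq | hq
    · exfalso
      have h4x : (4:ℕ) ∣ (2 * ℓ : ZMod n).val := by
        rw [hxv]
        refine (Nat.dvd_mod_iff h4n).2 ?_
        obtain ⟨b, hb⟩ : ∃ b, ℓ.val = 2 * b := ⟨ℓ.val / 2, by omega⟩
        exact ⟨b, by omega⟩
      obtain ⟨c, hc⟩ := h4x
      exact h8n ⟨c, by omega⟩
    · exact hq
  have hmodd : m % 2 = 1 := by omega
  have h4ne : (4 : ZMod n) ≠ -4 := by
    intro h
    have h80 : ((8:ℕ) : ZMod n) = 0 := by push_cast; linear_combination h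
    have h8' := (ZMod.natCast_eq_zero_iff _ _).1 h80
    have hle := Nat.le_of_dvd (by norm_num) h8'
    have hne : n = 8 := by omega
    exact h8n (by rw [hne])
  -- the badness-swapping involution
  have hswap : ∀ s : ZMod m, (2 * (k (i - s)) ^ 2 = -2 ↔ ¬ (2 * (k s) ^ 2 = -2)) := by
    intro s
    have hsq : 4 * (k (i - s)) ^ 2 = 4 * (k i) ^ 2 * (k s) ^ 2 := by
      have h2Cs := h2C s
      have hkis := hkinv s
      have hrel : 2 * k (i - s) = 2 * (k i * k s) ∨
          2 * k (i - s) = -(2 * (k i * k s)) := by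
        rcases hsh s with h | h <;> rcases hC00 i C hsh with h0 | h0 <;> rw [h, h0] at h2Cs
        · left; linear_combination (k s) * h2Cs - 2 * k (i - s) * hkis
        · right; linear_combination (k s) * h2Cs - 2 * k (i - s) * hkis
        · right; linear_combination (-(k s)) * h2Cs - 2 * k (i - s) * hkis
        · left; linear_combination (-(k s)) * h2Cs - 2 * k (i - s) * hkis
      rcases hrel with h | h
      · linear_combination (2 * k (i - s) + 2 * (k i * k s)) * h
      · linear_combination (2 * k (i - s) - 2 * (k i * k s)) * h
    constructor
    · intro hbs hns
      apply h4ne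
      linear_combination 2 * hbs - hsq - (2 * (k s) ^ 2) * hbad + 2 * hns
    · intro hns
      rcases part1 s with hgs | hbs
      · rcases part1 (i - s) with hg' | hb'
        · exfalso
          apply h4ne
          linear_combination -(2 * hg') + hsq + (2 * (k s) ^ 2) * hbad - 2 * hgs
        · exact hb'
      · exact absurd hbs hns
  classical
  have hcard : (Finset.univ.filter (fun s : ZMod m => 2 * (k s) ^ 2 = -2)).card
      = (Finset.univ.filter (fun s : ZMod m => ¬ (2 * (k s) ^ 2 = -2))).card := by
    refine Finset.card_bij' (fun s _ => i - s) (fun s _ => i - s) ?_ ?_ ?_ ?_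
    · intro a ha
      simp only [Finset.mem_filter, Finset.mem_univ, true_and] at ha ⊢
      intro hb
      exact ((hswap a).1 hb) ha
    · intro a ha
      simp only [Finset.mem_filter, Finset.mem_univ, true_and] at ha ⊢
      exact (hswap a).2 ha
    · intro a _; ring
    · intro a _; ring
  have htot : (Finset.univ.filter (fun s : ZMod m => 2 * (k s) ^ 2 = -2)).card
      + (Finset.univ.filter (fun s : ZMod m => ¬ (2 * (k s) ^ 2 = -2))).card = m := by
    rw [Finset.card_filter_add_card_filter_not, Finset.card_univ, ZMod.card]
  omega

end CubicFIG
end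

section
/- Let Γ = X_a(m,n,S,ℓ) satisfy Assumption A. Then there is an isomorphism from Γ, mapping each set V_i onto the corresponding set V_i of the target graph, onto a graph of one of the following two kinds: (a) HTG(m,n,ℓ') for some ℓ' ∈ ℤ_n; or (b) X_a(m,n,[1,k,1,k,…,1,k],ℓ') where m is even, for some ℓ' ∈ ℤ_n and an odd k ∈ ℤ_n with 2k ≠ ±2 and 2k² = ±2 in ℤ_n. -/
namespace CubicFIG

open SimpleGraph

variable {V : Type*}

section ZModLemmas

variable {n : ℕ}

lemma val_add_mod2 (hn2 : n % 2 = 0) [NeZero n] (x y : ZMod n) :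
    (x + y).val % 2 = (x.val + y.val) % 2 := by
  rw [ZMod.val_add, Nat.mod_mod_of_dvd _ (Nat.dvd_of_mod_eq_zero hn2)]

lemma val_mul_mod2 (hn2 : n % 2 = 0) [NeZero n] (x y : ZMod n) :
    (x * y).val % 2 = (x.val * y.val) % 2 := by
  rw [ZMod.val_mul, Nat.mod_mod_of_dvd _ (Nat.dvd_of_mod_eq_zero hn2)]

lemma val_neg_mod2 (hn2 : n % 2 = 0) [NeZero n] (x : ZMod n) :
    (-x).val % 2 = x.val % 2 := by
  have h := val_add_mod2 hn2 x (-x)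
  simp only [add_neg_cancel, ZMod.val_zero] at h
  omega

lemma cast_val_eq [NeZero n] (x : ZMod n) : ((x.val : ℕ) : ZMod n) = x :=
  ZMod.natCast_rightInverse x

lemma two_val (hn : 3 ≤ n) : (2 : ZMod n).val = 2 := by
  have : ((2 : ℕ) : ZMod n).val = 2 := ZMod.val_cast_of_lt (by omega)
  simpa using this

lemma two_nezero (hn : 3 ≤ n) : (2 : ZMod n) ≠ 0 := by
  intro h
  have := two_val (n := n) hn
  rw [h, ZMod.val_zero] at this
  omega

lemma one_val (hn : 2 ≤ n) : (1 : ZMod n).val = 1 := by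
  have : ((1 : ℕ) : ZMod n).val = 1 := ZMod.val_cast_of_lt (by omega)
  simpa using this

lemma one_nezero' (hn : 2 ≤ n) : (1 : ZMod n) ≠ 0 := by
  intro h
  have := one_val (n := n) hn
  rw [h, ZMod.val_zero] at this
  omega

lemma two_mul_half (hn2 : n % 2 = 0) : (2 : ZMod n) * (↑(n / 2) : ZMod n) = 0 := by
  have : ((2 * (n / 2) : ℕ) : ZMod n) = ((n : ℕ) : ZMod n) := by
    congr 1; omega
  push_cast at this
  rw [this, ZMod.natCast_self]

lemma half_val (hn : 1 ≤ n) : ((↑(n / 2) : ZMod n)).val = n / 2 :=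
  ZMod.val_cast_of_lt (by omega)

lemma mul_half_of_odd (hn2 : n % 2 = 0) [NeZero n] {x : ZMod n} (hx : x.val % 2 = 1) :
    x * (↑(n / 2) : ZMod n) = (↑(n / 2) : ZMod n) := by
  obtain ⟨c, hc⟩ : ∃ c : ZMod n, x = 2 * c + 1 := by
    refine ⟨(↑(x.val / 2) : ZMod n), ?_⟩
    have : ((x.val : ℕ) : ZMod n) = ((2 * (x.val / 2) + 1 : ℕ) : ZMod n) := by
      congr 1; omega
    push_cast at this
    rw [cast_val_eq] at this
    simpa using this
  have h2 : (2 : ZMod n) * (↑(n / 2) : ZMod n) = 0 := two_mul_half hn2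
  rw [hc]
  linear_combination c * h2

lemma mul_half_of_even (hn2 : n % 2 = 0) [NeZero n] {x : ZMod n} (hx : x.val % 2 = 0) :
    x * (↑(n / 2) : ZMod n) = 0 := by
  obtain ⟨c, hc⟩ : ∃ c : ZMod n, x = 2 * c := by
    refine ⟨(↑(x.val / 2) : ZMod n), ?_⟩
    have : ((x.val : ℕ) : ZMod n) = ((2 * (x.val / 2) : ℕ) : ZMod n) := by
      congr 1; omega
    push_cast at this
    rw [cast_val_eq] at this
    simpa using this
  have h2 : (2 : ZMod n) * (↑(n / 2) : ZMod n) = 0 := two_mul_half hn2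
  rw [hc]
  linear_combination c * h2

lemma two_mul_eq_zero (hn : 3 ≤ n) (hn2 : n % 2 = 0) {x : ZMod n}
    (h : 2 * x = 0) : x = 0 ∨ x = (↑(n / 2) : ZMod n) := by
  haveI : NeZero n := ⟨by omega⟩
  have hv : (x + x).val = 0 := by
    have : x + x = 0 := by linear_combination h
    simp [this]
  have hadd : (x + x).val = (x.val + x.val) % n := ZMod.val_add x x
  have hdvd : n ∣ x.val + x.val := Nat.dvd_of_mod_eq_zero (by omega)
  have hlt : x.val < n := ZMod.val_lt x
  rcases hdvd with ⟨c, hc⟩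
  have hc2 : c = 0 ∨ c = 1 := by
    rcases Nat.lt_or_ge c 2 with h' | h'
    · omega
    · exfalso; nlinarith
  rcases hc2 with rfl | rfl
  · left
    have : x.val = 0 := by omega
    rw [← cast_val_eq x, this]; simp
  · right
    have : x.val = n / 2 := by omega
    rw [← cast_val_eq x, this]

lemma two_mul_eq_iff (hn : 3 ≤ n) (hn2 : n % 2 = 0) {x y : ZMod n} :
    2 * x = 2 * y ↔ x = y ∨ x = y + (↑(n / 2) : ZMod n) := by
  constructor
  · intro h
    have : 2 * (x - y) = 0 := by linear_combination h
    rcases two_mul_eq_zero hn hn2 this with h0 | hN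
    · left; linear_combination h0
    · right; linear_combination hN
  · rintro (rfl | rfl)
    · rfl
    · have h2 := two_mul_half (n := n) hn2
      linear_combination h2

lemma unit_val_odd (hn2 : n % 2 = 0) [NeZero n] {x : ZMod n} (hx : IsUnit x) :
    x.val % 2 = 1 := by
  have hcop : Nat.Coprime x.val n := by
    rw [← ZMod.isUnit_iff_coprime]
    rwa [cast_val_eq]
  rcases Nat.even_or_odd x.val with he | ho
  · exfalso
    have h2 : (2 : ℕ) ∣ Nat.gcd x.val n := Nat.dvd_gcd he.two_dvd (Nat.dvd_of_mod_eq_zero hn2)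
    rw [hcop] at h2
    omega
  · obtain ⟨t, ht⟩ := ho; omega

lemma isUnit_of_coprime_val [NeZero n] (x : ZMod n) (h : Nat.Coprime x.val n) : IsUnit x := by
  rw [← cast_val_eq x]
  exact (ZMod.isUnit_iff_coprime _ _).mpr h

end ZModLemmas

section Graph

variable {m n : ℕ} {ℓ : ZMod n} {k : ZMod m → ZMod n}

/-- The seam shift: `ℓ` on the last fiber, `0` elsewhere. -/
def LL (m n : ℕ) (ℓ : ZMod n) : ZMod m → ZMod n :=
  fun i => if i = ((m - 1 : ℕ) : ZMod m) then ℓ else 0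

/-- Uniform description of (directed) link edges. -/
def LR (m n : ℕ) (ℓ : ZMod n) (u v : ZMod m × ZMod n) : Prop :=
  u.2.val % 2 = u.1.val % 2 ∧ v.1 = u.1 + 1 ∧ v.2 = u.2 + LL m n ℓ u.1

lemma mlast_val (hm : 3 ≤ m) : (((m - 1 : ℕ)) : ZMod m).val = m - 1 :=
  ZMod.val_cast_of_lt (by omega)

lemma mlast_add_one (hm : 3 ≤ m) : (((m - 1 : ℕ)) : ZMod m) + 1 = 0 := by
  have h1 : (((m - 1 : ℕ)) : ZMod m) + 1 = (((m - 1 + 1 : ℕ)) : ZMod m) := by push_cast; ring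
  rw [h1, show m - 1 + 1 = m by omega, ZMod.natCast_self]

lemma one_nezero_m (hm : 3 ≤ m) : (1 : ZMod m) ≠ 0 := one_nezero' (by omega)

lemma two_nezero_m (hm : 3 ≤ m) : (2 : ZMod m) ≠ 0 := two_nezero hm

lemma linkrel_iff (hm : 3 ≤ m) (u v : ZMod m × ZMod n) :
    XaLinkRel m n ℓ u v ↔ LR m n ℓ u v := by
  haveI : NeZero m := ⟨by omega⟩
  unfold XaLinkRel LR LL
  constructor
  · rintro (⟨hp, hle, hf, hc⟩ | ⟨hp, hfl, hf, hc⟩)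
    · have hne : u.1 ≠ ((m - 1 : ℕ) : ZMod m) := by
        intro h
        rw [h, mlast_val hm] at hle
        omega
      rw [if_neg hne]
      exact ⟨hp, hf, by rw [hc, add_zero]⟩
    · rw [hfl, if_pos rfl]
      refine ⟨by rw [mlast_val hm]; exact hp, ?_, hc⟩
      rw [hf]; exact (mlast_add_one hm).symm
  · rintro ⟨hp, hf, hc⟩
    by_cases hlast : u.1 = ((m - 1 : ℕ) : ZMod m)
    · right
      rw [if_pos hlast] at hc
      refine ⟨by rw [hlast, mlast_val hm] at hp; exact hp, hlast, ?_, hc⟩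
      rw [hf, hlast, mlast_add_one hm]
    · left
      rw [if_neg hlast] at hc
      refine ⟨hp, ?_, hf, by rw [hc, add_zero]⟩
      have : u.1.val < m := ZMod.val_lt u.1
      have hne : u.1.val ≠ m - 1 := by
        intro h
        apply hlast
        rw [← cast_val_eq u.1, h]
      omega

lemma factor_adj_iff (hm : 3 ≤ m) (hn : 6 ≤ n) (hn2 : n % 2 = 0)
    (hodd : ∀ i, (k i).val % 2 = 1) (u v : ZMod m × ZMod n) :
    (XaFactor m n k (fun i => -(k i))).Adj u v ↔
      u.1 = v.1 ∧ (v.2 = u.2 + k u.1 ∨ v.2 = u.2 - k u.1) := by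
  haveI : NeZero n := ⟨by omega⟩
  unfold XaFactor XaCycleRel
  rw [SimpleGraph.fromRel_adj]
  constructor
  · rintro ⟨hne, ⟨hp, hf, hc⟩ | ⟨hp, hf, hc⟩⟩
    · refine ⟨hf, ?_⟩
      rcases hc with h | h
      · left; exact h
      · right; rw [h]; ring
    · refine ⟨hf.symm, ?_⟩
      rcases hc with h | h
      · right; rw [← hf]; linear_combination -h
      · left; rw [← hf]; linear_combination -h
  · rintro ⟨hfib, hor⟩
    have hkne : k u.1 ≠ 0 := by
      intro h
      have := hodd u.1
      rw [h, ZMod.val_zero] at this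
      omega
    have hsne : v.2 ≠ u.2 := by
      rcases hor with h | h <;> rw [h]
      · simp [hkne]
      · simp [sub_eq_self, hkne]
    have hne : u ≠ v := by
      intro h; rw [h] at hsne; exact hsne rfl
    by_cases hp : u.2.val % 2 = u.1.val % 2
    · refine ⟨hne, Or.inl ⟨hp, hfib, ?_⟩⟩
      rcases hor with h | h
      · left; exact h
      · right; rw [h]; ring
    · have hk1 : (k u.1).val % 2 = 1 := hodd u.1
      have hvp : v.2.val % 2 = v.1.val % 2 := by
        rw [← hfib]
        have hu2 : u.2.val % 2 < 2 := Nat.mod_lt _ (by omega)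
        have hu1 : u.1.val % 2 < 2 := Nat.mod_lt _ (by omega)
        rcases hor with h | h
        · rw [h, val_add_mod2 hn2]
          omega
        · have hnk : (-(k u.1)).val % 2 = 1 := by rw [val_neg_mod2 hn2]; exact hk1
          rw [h, sub_eq_add_neg, val_add_mod2 hn2]
          omega
      refine ⟨hne, Or.inr ⟨hvp, hfib.symm, ?_⟩⟩
      rcases hor with h | h
      · right; rw [← hfib]; linear_combination -h
      · left; rw [← hfib]; linear_combination -h

lemma xa_adj_iff (hm : 3 ≤ m) (hn : 6 ≤ n) (hn2 : n % 2 = 0)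
    (hodd : ∀ i, (k i).val % 2 = 1) (u v : ZMod m × ZMod n) :
    (XaGraph m n k (fun i => -(k i)) ℓ).Adj u v ↔
      ((XaFactor m n k (fun i => -(k i))).Adj u v ∨ (LR m n ℓ u v ∨ LR m n ℓ v u)) := by
  haveI : NeZero m := ⟨by omega⟩
  have hFne : ∀ w z : ZMod m × ZMod n, LR m n ℓ w z → w ≠ z := by
    rintro w z ⟨_, hf, _⟩ h
    rw [h] at hf
    exact one_nezero_m hm (by linear_combination -hf)
  constructor
  · intro h
    rw [XaGraph, SimpleGraph.fromRel_adj] at h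
    obtain ⟨hne, (hc | hl) | (hc | hl)⟩ := h
    · left; rw [XaFactor, SimpleGraph.fromRel_adj]; exact ⟨hne, Or.inl hc⟩
    · right; left; exact (linkrel_iff hm u v).mp hl
    · left; rw [XaFactor, SimpleGraph.fromRel_adj]; exact ⟨hne, Or.inr hc⟩
    · right; right; exact (linkrel_iff hm v u).mp hl
  · intro h
    rw [XaGraph, SimpleGraph.fromRel_adj]
    rcases h with hH | hl | hl
    · rw [XaFactor, SimpleGraph.fromRel_adj] at hH
      obtain ⟨hne, hcc⟩ := hH
      exact ⟨hne, by tauto⟩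
    · exact ⟨hFne u v hl, Or.inl (Or.inr ((linkrel_iff hm u v).mpr hl))⟩
    · exact ⟨(hFne v u hl).symm, Or.inr (Or.inr ((linkrel_iff hm v u).mpr hl))⟩

lemma link_iff (hm : 3 ≤ m) (hn : 6 ≤ n) (hn2 : n % 2 = 0)
    (hodd : ∀ i, (k i).val % 2 = 1) (u v : ZMod m × ZMod n) :
    ((XaGraph m n k (fun i => -(k i)) ℓ).Adj u v ∧
      ¬ (XaFactor m n k (fun i => -(k i))).Adj u v) ↔ (LR m n ℓ u v ∨ LR m n ℓ v u) := by
  haveI : NeZero m := ⟨by omega⟩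
  constructor
  · rintro ⟨hadj, hnH⟩
    rcases (xa_adj_iff hm hn hn2 hodd u v).mp hadj with hH | hl
    · exact absurd hH hnH
    · exact hl
  · intro hl
    refine ⟨(xa_adj_iff hm hn hn2 hodd u v).mpr (Or.inr hl), ?_⟩
    intro hH
    have hfib : u.1 = v.1 := ((factor_adj_iff hm hn hn2 hodd u v).mp hH).1
    rcases hl with ⟨_, hf, _⟩ | ⟨_, hf, _⟩
    · rw [hfib] at hf
      exact one_nezero_m hm (by linear_combination -hf)
    · rw [← hfib] at hf
      exact one_nezero_m hm (by linear_combination -hf)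

end Graph

section Aut

variable {m n : ℕ} {ℓ : ZMod n} {k : ZMod m → ZMod n}

lemma zmod_cast_succ {M : ℕ} (t : ℕ) : ((t + 1 : ℕ) : ZMod M) = ((t : ℕ) : ZMod M) + 1 := by
  push_cast; ring

lemma zmod_induction {M : ℕ} [NeZero M] {p : ZMod M → Prop} (h0 : p 0)
    (hstep : ∀ i, p i → p (i + 1)) : ∀ i, p i := by
  have h : ∀ t : ℕ, p ((t : ℕ) : ZMod M) := by
    intro t
    induction t with
    | zero => simp only [Nat.cast_zero]; exact h0
    | succ s ih => rw [zmod_cast_succ]; exact hstep _ ih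
  intro i
  have := h i.val
  rwa [cast_val_eq] at this

lemma fiber_gen {N : ℕ} [NeZero N] {a b : ZMod N} (hab : b * a = 1) (x : ZMod N) :
    ∃ t : ℕ, (t : ZMod N) * a = x := by
  refine ⟨(x * b).val, ?_⟩
  rw [cast_val_eq, mul_assoc, hab, mul_one]

lemma fiber_induction {N : ℕ} [NeZero N] {p : ZMod N → Prop} {a b : ZMod N} (hab : b * a = 1)
    (h0 : p 0) (hstep : ∀ x, p x → p (x + a)) : ∀ x, p x := by
  have h : ∀ t : ℕ, p ((t : ZMod N) * a) := by
    intro t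
    induction t with
    | zero => simp only [Nat.cast_zero, zero_mul]; exact h0
    | succ s ih =>
      have hx := hstep _ ih
      rw [zmod_cast_succ]
      have he : ((s : ZMod N) + 1) * a = (s : ZMod N) * a + a := by ring
      rw [he]; exact hx
  intro x
  obtain ⟨t, ht⟩ := fiber_gen hab x
  rw [← ht]; exact h t

lemma two_mul_unit_ne_zero (hn : 3 ≤ n) {x : ZMod n} (h : IsUnit x) :
    2 * x ≠ 0 := by
  intro h0
  obtain ⟨y, hy⟩ := h.exists_left_inv
  exact two_nezero hn (by linear_combination y * h0 - 2 * hy)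

lemma aut_structure (hm : 3 ≤ m) (hn : 6 ≤ n) (hn2 : n % 2 = 0)
    (hodd : ∀ i, (k i).val % 2 = 1) (hunit : ∀ i, IsUnit (k i))
    (g : Equiv.Perm (ZMod m × ZMod n))
    (hgA : IsAut (XaGraph m n k (fun i => -(k i)) ℓ) g)
    (hgH : ∀ u v, (XaFactor m n k (fun i => -(k i))).Adj u v ↔
      (XaFactor m n k (fun i => -(k i))).Adj (g u) (g v)) :
    ∃ (σ : ZMod m → ZMod m) (α d : ZMod m → ZMod n),
      (∀ i, σ i = (g (i, 0)).1) ∧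
      (∀ i x, g (i, x) = (σ i, α i * x + d i)) ∧
      (∀ i, α i * k i = k (σ i) ∨ α i * k i = -(k (σ i))) ∧
      (∀ i, 2 * α (i + 1) = 2 * α i) ∧
      (∀ i, σ (i + 1) = σ i + 1 ∨ σ i = σ (i + 1) + 1) ∧
      Function.Injective σ := by
  haveI : NeZero n := ⟨by omega⟩
  haveI : NeZero m := ⟨by omega⟩
  obtain ⟨kv, hkv⟩ : ∃ kv : ZMod m → ZMod n, ∀ i, kv i * k i = 1 := by
    choose kv hkv using fun i => (hunit i).exists_left_inv
    exact ⟨kv, hkv⟩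
  set σ : ZMod m → ZMod m := fun i => (g (i, 0)).1 with hσdef
  have hHstep : ∀ (i : ZMod m) (x : ZMod n),
      (XaFactor m n k (fun i => -(k i))).Adj (g (i, x)) (g (i, x + k i)) := by
    intro i x
    exact (hgH _ _).mp ((factor_adj_iff hm hn hn2 hodd _ _).mpr ⟨rfl, Or.inl rfl⟩)
  have hcomp : ∀ (i : ZMod m) (x : ZMod n),
      (g (i, x)).1 = (g (i, x + k i)).1 ∧
      ((g (i, x + k i)).2 = (g (i, x)).2 + k ((g (i, x)).1) ∨
        (g (i, x + k i)).2 = (g (i, x)).2 - k ((g (i, x)).1)) :=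
    fun i x => (factor_adj_iff hm hn hn2 hodd _ _).mp (hHstep i x)
  have hfst : ∀ (i : ZMod m) (x : ZMod n), (g (i, x)).1 = σ i := by
    intro i
    exact fiber_induction (hkv i) (p := fun x => (g (i, x)).1 = σ i) rfl
      (fun x hx => ((hcomp i x).1).symm.trans hx)
  have haff : ∀ i : ZMod m, ∃ α d : ZMod n,
      (∀ x, (g (i, x)).2 = α * x + d) ∧
      (α * k i = k (σ i) ∨ α * k i = -(k (σ i))) := by
    intro i
    have hsd : ∀ x, (g (i, x + k i)).2 = (g (i, x)).2 + k (σ i) ∨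
        (g (i, x + k i)).2 = (g (i, x)).2 - k (σ i) := by
      intro x
      have h := (hcomp i x).2
      rwa [hfst i x] at h
    have hFinj : ∀ x y : ZMod n, (g (i, x)).2 = (g (i, y)).2 → x = y := by
      intro x y hxy
      have h1 : g (i, x) = g (i, y) := Prod.ext (by rw [hfst i x, hfst i y]) hxy
      have h2 := g.injective h1
      exact ((Prod.mk.injEq _ _ _ _).mp h2).2
    have hposs : ∀ x, (g (i, x + k i)).2 = (g (i, x)).2 + k (σ i) →
        (g (i, x + k i + k i)).2 = (g (i, x + k i)).2 + k (σ i) := by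
      intro x hx
      rcases hsd (x + k i) with h | h
      · exact h
      · exfalso
        have hxx : (g (i, x + k i + k i)).2 = (g (i, x)).2 := by rw [h, hx]; ring
        have h3 := hFinj _ _ hxx
        have h4 : 2 * k i = 0 := by linear_combination h3
        exact two_mul_unit_ne_zero (by omega) (hunit i) h4
    have hnegs : ∀ x, (g (i, x + k i)).2 = (g (i, x)).2 - k (σ i) →
        (g (i, x + k i + k i)).2 = (g (i, x + k i)).2 - k (σ i) := by
      intro x hx
      rcases hsd (x + k i) with h | h
      · exfalso
        have hxx : (g (i, x + k i + k i)).2 = (g (i, x)).2 := by rw [h, hx]; ring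
        have h3 := hFinj _ _ hxx
        have h4 : 2 * k i = 0 := by linear_combination h3
        exact two_mul_unit_ne_zero (by omega) (hunit i) h4
      · exact h
    have hsign : (∀ x, (g (i, x + k i)).2 = (g (i, x)).2 + k (σ i)) ∨
        (∀ x, (g (i, x + k i)).2 = (g (i, x)).2 - k (σ i)) := by
      rcases hsd 0 with h0 | h0
      · exact Or.inl (fiber_induction (hkv i)
          (p := fun x => (g (i, x + k i)).2 = (g (i, x)).2 + k (σ i)) h0 hposs)
      · exact Or.inr (fiber_induction (hkv i)
          (p := fun x => (g (i, x + k i)).2 = (g (i, x)).2 - k (σ i)) h0 hnegs)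
    rcases hsign with hs | hs
    · have hlin : ∀ t : ℕ, (g (i, (t : ZMod n) * k i)).2 = (g (i, (0 : ZMod n))).2
          + (t : ZMod n) * k (σ i) := by
        intro t
        induction t with
        | zero => simp only [Nat.cast_zero, zero_mul, add_zero]
        | succ s ih =>
          rw [zmod_cast_succ]
          have he : ((s : ZMod n) + 1) * k i = (s : ZMod n) * k i + k i := by ring
          rw [he, hs, ih]; ring
      refine ⟨kv i * k (σ i), (g (i, (0 : ZMod n))).2, ?_, ?_⟩
      · intro x
        obtain ⟨t, ht⟩ := fiber_gen (hkv i) x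
        have h1 := hlin t
        rw [ht] at h1
        have htt : (t : ZMod n) = x * kv i := by
          rw [← ht, mul_assoc, mul_comm (k i) (kv i), hkv i, mul_one]
        rw [h1, htt]; ring
      · left
        linear_combination k (σ i) * hkv i
    · have hlin : ∀ t : ℕ, (g (i, (t : ZMod n) * k i)).2 = (g (i, (0 : ZMod n))).2
          - (t : ZMod n) * k (σ i) := by
        intro t
        induction t with
        | zero => simp only [Nat.cast_zero, zero_mul, sub_zero]
        | succ s ih =>
          rw [zmod_cast_succ]
          have he : ((s : ZMod n) + 1) * k i = (s : ZMod n) * k i + k i := by ring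
          rw [he, hs, ih]; ring
      refine ⟨-(kv i * k (σ i)), (g (i, (0 : ZMod n))).2, ?_, ?_⟩
      · intro x
        obtain ⟨t, ht⟩ := fiber_gen (hkv i) x
        have h1 := hlin t
        rw [ht] at h1
        have htt : (t : ZMod n) = x * kv i := by
          rw [← ht, mul_assoc, mul_comm (k i) (kv i), hkv i, mul_one]
        rw [h1, htt]; ring
      · right
        linear_combination (-(k (σ i))) * hkv i
  choose α d hP using haff
  have hgfull : ∀ (i : ZMod m) (x : ZMod n), g (i, x) = (σ i, α i * x + d i) :=
    fun i x => Prod.ext (hfst i x) ((hP i).1 x)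
  have hαk : ∀ i, α i * k i = k (σ i) ∨ α i * k i = -(k (σ i)) := fun i => (hP i).2
  have hαu : ∀ i, IsUnit (α i) := by
    intro i
    have h := hαk i
    have hK : IsUnit (k (σ i)) := hunit _
    rcases h with h | h
    · exact isUnit_of_mul_isUnit_left (h ▸ hK)
    · exact isUnit_of_mul_isUnit_left (h ▸ hK.neg)
  obtain ⟨av, hav⟩ : ∃ av : ZMod m → ZMod n, ∀ i, av i * α i = 1 := by
    choose av hav using fun i => (hαu i).exists_left_inv
    exact ⟨av, hav⟩
  have hσinj : Function.Injective σ := by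
    intro i i' h
    have hx : α i * (av i * -d i) + d i = 0 := by linear_combination (-(d i)) * hav i
    have hx' : α i' * (av i' * -d i') + d i' = 0 := by linear_combination (-(d i')) * hav i'
    have he : g (i, av i * -d i) = g (i', av i' * -d i') := by
      rw [hgfull, hgfull, hx, hx', h]
    have h2 := g.injective he
    exact ((Prod.mk.injEq _ _ _ _).mp h2).1
  have hlinkmain : ∀ i : ZMod m,
      (2 * α (i + 1) = 2 * α i) ∧ (σ (i + 1) = σ i + 1 ∨ σ i = σ (i + 1) + 1) := by
    intro i
    have him : ∀ j : ZMod n, j.val % 2 = i.val % 2 →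
        LR m n ℓ (g (i, j)) (g (i + 1, j + LL m n ℓ i)) ∨
        LR m n ℓ (g (i + 1, j + LL m n ℓ i)) (g (i, j)) := by
      intro j hj
      have hsrc : (XaGraph m n k (fun i => -(k i)) ℓ).Adj (i, j) (i + 1, j + LL m n ℓ i) ∧
          ¬ (XaFactor m n k (fun i => -(k i))).Adj (i, j) (i + 1, j + LL m n ℓ i) :=
        (link_iff hm hn hn2 hodd _ _).mpr (Or.inl ⟨hj, rfl, rfl⟩)
      have himg : (XaGraph m n k (fun i => -(k i)) ℓ).Adj (g (i, j)) (g (i + 1, j + LL m n ℓ i)) ∧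
          ¬ (XaFactor m n k (fun i => -(k i))).Adj (g (i, j)) (g (i + 1, j + LL m n ℓ i)) :=
        ⟨(hgA _ _).mpr hsrc.1, fun hh => hsrc.2 ((hgH _ _).mpr hh)⟩
      exact (link_iff hm hn hn2 hodd _ _).mp himg
    set j0 : ZMod n := ((i.val % 2 : ℕ) : ZMod n) with hj0def
    have hj0 : j0.val % 2 = i.val % 2 := by
      rw [hj0def, ZMod.val_cast_of_lt (by have := Nat.mod_lt i.val (show 0 < 2 by omega); omega)]
      have := Nat.mod_lt i.val (show 0 < 2 by omega)
      omega
    have hj2 : (j0 + 2).val % 2 = i.val % 2 := by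
      rw [val_add_mod2 hn2, two_val (by omega)]
      omega
    have h1 := him j0 hj0
    have h2 := him (j0 + 2) hj2
    rw [hgfull, hgfull] at h1 h2
    have hexcl : ¬ (σ (i + 1) = σ i + 1 ∧ σ i = σ (i + 1) + 1) := by
      rintro ⟨ha, hb⟩
      rw [ha] at hb
      exact two_nezero_m hm (by linear_combination -hb)
    rcases h1 with ⟨hp1, hf1, hc1⟩ | ⟨hp1, hf1, hc1⟩ <;>
      rcases h2 with ⟨hp2, hf2, hc2⟩ | ⟨hp2, hf2, hc2⟩
    · exact ⟨by linear_combination hc2 - hc1, Or.inl hf1⟩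
    · exact absurd ⟨hf1, hf2⟩ hexcl
    · exact absurd ⟨hf2, hf1⟩ hexcl
    · exact ⟨by linear_combination hc1 - hc2, Or.inr hf1⟩
  exact ⟨σ, α, d, fun i => rfl, hgfull, hαk, fun i => (hlinkmain i).1,
    fun i => (hlinkmain i).2, hσinj⟩

end Aut

section Shape

variable {m n : ℕ}

lemma sigma_shape [NeZero m] (h2 : (2 : ZMod m) ≠ 0) {σ : ZMod m → ZMod m}
    (hinj : Function.Injective σ)
    (hstep : ∀ i, σ (i + 1) = σ i + 1 ∨ σ i = σ (i + 1) + 1) :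
    (∀ i, σ (i + 1) = σ i + 1) ∨ (∀ i, σ (i + 1) = σ i - 1) := by
  by_cases h0 : σ (0 + 1) = σ 0 + 1
  · left
    refine zmod_induction (p := fun i => σ (i + 1) = σ i + 1) h0 ?_
    intro i hi
    rcases hstep (i + 1) with h | h
    · exact h
    · exfalso
      have he : σ (i + 1 + 1) = σ i := by linear_combination hi - h
      exact h2 (by linear_combination hinj he)
  · right
    have h0' : σ (0 + 1) = σ 0 - 1 := by
      rcases hstep 0 with h | h
      · exact absurd h h0
      · linear_combination -h
    refine zmod_induction (p := fun i => σ (i + 1) = σ i - 1) h0' ?_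
    intro i hi
    rcases hstep (i + 1) with h | h
    · exfalso
      have he : σ (i + 1 + 1) = σ i := by
        rw [h, hi]; ring
      exact h2 (by linear_combination hinj he)
    · linear_combination -h

lemma sigma_plus_formula [NeZero m] {σ : ZMod m → ZMod m}
    (h : ∀ i, σ (i + 1) = σ i + 1) : ∀ i, σ i = σ 0 + i := by
  refine zmod_induction (p := fun i => σ i = σ 0 + i) (by ring) ?_
  intro i hi
  rw [h i, hi]; ring

lemma sigma_minus_formula [NeZero m] {σ : ZMod m → ZMod m}
    (h : ∀ i, σ (i + 1) = σ i - 1) : ∀ i, σ i = σ 0 - i := by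
  refine zmod_induction (p := fun i => σ i = σ 0 - i) (by ring) ?_
  intro i hi
  rw [h i, hi]; ring

lemma chain_const [NeZero m] {α : ZMod m → ZMod n}
    (h : ∀ i, 2 * α (i + 1) = 2 * α i) : ∀ i, 2 * α i = 2 * α 0 := by
  refine zmod_induction (p := fun i => 2 * α i = 2 * α 0) rfl ?_
  intro i hi
  rw [h i, hi]

end Shape

section Numeric

variable {m n : ℕ} {k : ZMod m → ZMod n} {β : ZMod n}

lemma beta_squared (hn : 6 ≤ n) (hn2 : n % 2 = 0) (hk0 : k 0 = 1)
    (hS1 : ∀ i, 2 * k (i + 1) = 2 * (β * k i) ∨ 2 * k (i + 1) = -(2 * (β * k i)))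
    (hrefl : 2 * k (-1) = 2 * k 1 ∨ 2 * k (-1) = -(2 * k 1)) :
    2 * β ^ 2 = 2 ∨ 2 * β ^ 2 = -2 := by
  haveI : NeZero n := ⟨by omega⟩
  set N : ZMod n := ((n / 2 : ℕ) : ZMod n) with hN
  have h2N : (2 : ZMod n) * N = 0 := two_mul_half hn2
  have h1 : 2 * k 1 = 2 * β ∨ 2 * k 1 = -(2 * β) := by
    have := hS1 0
    rw [zero_add, hk0, mul_one] at this
    exact this
  have h2 : 2 * k 0 = 2 * (β * k (-1)) ∨ 2 * k 0 = -(2 * (β * k (-1))) := by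
    have := hS1 (-1)
    rw [neg_add_cancel] at this
    exact this
  have hm1 : 2 * k (-1) = 2 * β ∨ 2 * k (-1) = -(2 * β) := by
    rcases hrefl with h | h <;> rcases h1 with h' | h'
    · left; rw [h, h']
    · right; rw [h, h']
    · right; rw [h, h']
    · left; rw [h]; rw [h']; ring
  have hkm1 : k (-1) = β ∨ k (-1) = β + N ∨ k (-1) = -β ∨ k (-1) = -β + N := by
    rcases hm1 with h | h
    · rcases (two_mul_eq_iff (by omega) hn2).mp h with h' | h'
      · exact Or.inl h'
      · exact Or.inr (Or.inl h')
    · have h' : 2 * k (-1) = 2 * (-β) := by linear_combination h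
      rcases (two_mul_eq_iff (by omega) hn2).mp h' with h'' | h''
      · exact Or.inr (Or.inr (Or.inl h''))
      · exact Or.inr (Or.inr (Or.inr h''))
  have hbk : 2 * (β * k (-1)) = 2 * β ^ 2 ∨ 2 * (β * k (-1)) = -(2 * β ^ 2) := by
    rcases hkm1 with h | h | h | h
    · left; rw [h]; ring
    · left; rw [h]; linear_combination β * h2N
    · right; rw [h]; ring
    · right; rw [h]; linear_combination β * h2N
  rw [hk0] at h2
  rcases h2 with h | h <;> rcases hbk with h' | h'
  · left; linear_combination -h - h'
  · right; linear_combination h + h'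
  · right; linear_combination h - h'
  · left; linear_combination -h + h'

lemma normal_form (hn : 6 ≤ n) (hn2 : n % 2 = 0) (hk0 : k 0 = 1)
    (hS1 : ∀ i, 2 * k (i + 1) = 2 * (β * k i) ∨ 2 * k (i + 1) = -(2 * (β * k i)))
    (hb2 : 2 * β ^ 2 = 2 ∨ 2 * β ^ 2 = -2) :
    ∀ t : ℕ, ∃ s η : ZMod n, (s = 1 ∨ s = -1) ∧ (η = 0 ∨ η = 1) ∧
      k ((t : ℕ) : ZMod m) = s * β ^ (t % 2) + η * ((n / 2 : ℕ) : ZMod n) := by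
  haveI : NeZero n := ⟨by omega⟩
  set N : ZMod n := ((n / 2 : ℕ) : ZMod n) with hN
  have h2N : (2 : ZMod n) * N = 0 := two_mul_half hn2
  intro t
  induction t with
  | zero =>
    refine ⟨1, 0, Or.inl rfl, Or.inl rfl, ?_⟩
    simp only [Nat.cast_zero, Nat.zero_mod, pow_zero, one_mul, zero_mul, add_zero]
    exact hk0
  | succ t ih =>
    obtain ⟨s, η, hs, hη, hk⟩ := ih
    have hcast : ((t + 1 : ℕ) : ZMod m) = ((t : ℕ) : ZMod m) + 1 := zmod_cast_succ t
    have hstep := hS1 ((t : ℕ) : ZMod m)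
    rw [← hcast] at hstep
    have hbk : 2 * (β * k ((t : ℕ) : ZMod m)) = 2 * (s * β ^ (t % 2 + 1)) := by
      rw [hk]
      rcases hη with rfl | rfl
      · ring
      · linear_combination β * h2N
    have hx : 2 * k ((t + 1 : ℕ) : ZMod m) = 2 * (s * β ^ (t % 2 + 1)) ∨
        2 * k ((t + 1 : ℕ) : ZMod m) = -(2 * (s * β ^ (t % 2 + 1))) := by
      rcases hstep with h | h
      · left; rw [h, hbk]
      · right; rw [h, hbk]
    have hpt : t % 2 = 0 ∨ t % 2 = 1 := by omega
    rcases hpt with hpt | hpt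
    · have hpt1 : (t + 1) % 2 = 1 := by omega
      rw [hpt] at hx
      rw [hpt1]
      rcases hx with h | h
      · rcases (two_mul_eq_iff (by omega) hn2).mp h with h' | h'
        · exact ⟨s, 0, hs, Or.inl rfl, by rw [h']; ring⟩
        · exact ⟨s, 1, hs, Or.inr rfl, by rw [h']; ring⟩
      · have h2 : 2 * k ((t + 1 : ℕ) : ZMod m) = 2 * (-s * β ^ (0 + 1)) := by
          linear_combination h
        rcases (two_mul_eq_iff (by omega) hn2).mp h2 with h' | h'
        · refine ⟨-s, 0, ?_, Or.inl rfl, by rw [h']; ring⟩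
          rcases hs with rfl | rfl
          · exact Or.inr rfl
          · exact Or.inl (by ring)
        · refine ⟨-s, 1, ?_, Or.inr rfl, by rw [h']; ring⟩
          rcases hs with rfl | rfl
          · exact Or.inr rfl
          · exact Or.inl (by ring)
    · have hpt1 : (t + 1) % 2 = 0 := by omega
      rw [hpt] at hx
      rw [hpt1]
      have hsq : 2 * (s * β ^ (1 + 1)) = 2 * s ∨ 2 * (s * β ^ (1 + 1)) = 2 * (-s) := by
        rcases hb2 with h | h
        · left; linear_combination s * h
        · right; linear_combination s * h
      have hx2 : 2 * k ((t + 1 : ℕ) : ZMod m) = 2 * s ∨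
          2 * k ((t + 1 : ℕ) : ZMod m) = 2 * (-s) := by
        rcases hx with h | h <;> rcases hsq with h' | h'
        · left; rw [h, h']
        · right; rw [h, h']
        · right; rw [h, h']; ring
        · left; rw [h]; rw [h']; ring
      rcases hx2 with h | h
      · rcases (two_mul_eq_iff (by omega) hn2).mp h with h' | h'
        · exact ⟨s, 0, hs, Or.inl rfl, by rw [h']; ring⟩
        · exact ⟨s, 1, hs, Or.inr rfl, by rw [h']; ring⟩
      · rcases (two_mul_eq_iff (by omega) hn2).mp h with h' | h'
        · refine ⟨-s, 0, ?_, Or.inl rfl, by rw [h']; ring⟩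
          rcases hs with rfl | rfl
          · exact Or.inr rfl
          · exact Or.inl (by ring)
        · refine ⟨-s, 1, ?_, Or.inr rfl, by rw [h']; ring⟩
          rcases hs with rfl | rfl
          · exact Or.inr rfl
          · exact Or.inl (by ring)

lemma m_odd_beta (hm : 3 ≤ m) (hn : 6 ≤ n) (hn2 : n % 2 = 0) (hk0 : k 0 = 1)
    (hS1 : ∀ i, 2 * k (i + 1) = 2 * (β * k i) ∨ 2 * k (i + 1) = -(2 * (β * k i)))
    (hb2 : 2 * β ^ 2 = 2 ∨ 2 * β ^ 2 = -2)
    (hmodd : m % 2 = 1) : 2 * β = 2 ∨ 2 * β = -2 := by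
  haveI : NeZero n := ⟨by omega⟩
  set N : ZMod n := ((n / 2 : ℕ) : ZMod n) with hN
  have h2N : (2 : ZMod n) * N = 0 := two_mul_half hn2
  obtain ⟨s1, η1, hs1, hη1, hk1⟩ := normal_form hn hn2 hk0 hS1 hb2 1
  obtain ⟨s2, η2, hs2, hη2, hk2⟩ := normal_form hn hn2 hk0 hS1 hb2 (m + 1)
  have hc : ((m + 1 : ℕ) : ZMod m) = ((1 : ℕ) : ZMod m) := by
    push_cast
    rw [ZMod.natCast_self]
    ring
  rw [hc] at hk2
  have hm2 : (m + 1) % 2 = 0 := by omega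
  rw [hm2, pow_zero, mul_one] at hk2
  have h12 : (1 : ℕ) % 2 = 1 := by omega
  rw [h12, pow_one] at hk1
  have heq : s1 * β + η1 * N = s2 + η2 * N := by rw [← hk1, ← hk2]
  have h2e : 2 * (s1 * β) = 2 * s2 := by
    have h2' : 2 * (s1 * β + η1 * N) = 2 * (s2 + η2 * N) := by rw [heq]
    rcases hη1 with rfl | rfl <;> rcases hη2 with rfl | rfl
    · linear_combination h2'
    · linear_combination h2' + h2N
    · linear_combination h2' - h2N
    · linear_combination h2'
  rcases hs1 with rfl | rfl <;> rcases hs2 with rfl | rfl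
  · left; linear_combination h2e
  · right; linear_combination h2e
  · right; linear_combination -h2e
  · left; linear_combination -h2e

end Numeric

section Relabel

variable {m n : ℕ}

lemma LR_pair {ℓ : ZMod n} (i i' : ZMod m) (x y : ZMod n) :
    LR m n ℓ (i, x) (i', y) ↔
      (x.val % 2 = i.val % 2 ∧ i' = i + 1 ∧ y = x + LL m n ℓ i) := Iff.rfl

def relabelEquiv (c e cv : ZMod m → ZMod n) (hc : ∀ i, cv i * c i = 1) :
    Equiv (ZMod m × ZMod n) (ZMod m × ZMod n) where
  toFun u := (u.1, c u.1 * u.2 + e u.1)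
  invFun u := (u.1, cv u.1 * (u.2 - e u.1))
  left_inv := by
    rintro ⟨i, x⟩
    have h : cv i * (c i * x + e i - e i) = (cv i * c i) * x := by ring
    simp only [h, hc i, one_mul]
  right_inv := by
    rintro ⟨i, x⟩
    have h : c i * (cv i * (x - e i)) + e i = (cv i * c i) * (x - e i) + e i := by ring
    simp only [h, hc i, one_mul, sub_add_cancel]

lemma relabel_iso (hm : 3 ≤ m) (hn : 6 ≤ n) (hn2 : n % 2 = 0)
    (k k' : ZMod m → ZMod n) (ℓ ℓ' : ZMod n)
    (hodd : ∀ i, (k i).val % 2 = 1) (hodd' : ∀ i, (k' i).val % 2 = 1)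
    (c e cv : ZMod m → ZMod n) (hc : ∀ i, cv i * c i = 1)
    (hcodd : ∀ i, (c i).val % 2 = 1) (heev : ∀ i, (e i).val % 2 = 0)
    (hck : ∀ i, c i * k i = k' i ∨ c i * k i = -(k' i))
    (hlink : ∀ i : ZMod m, ∀ j : ZMod n, j.val % 2 = i.val % 2 →
      c (i + 1) * (j + LL m n ℓ i) + e (i + 1) = c i * j + e i + LL m n ℓ' i) :
    ∃ E : XaGraph m n k (fun i => -(k i)) ℓ ≃g XaGraph m n k' (fun i => -(k' i)) ℓ',
      ∀ v : ZMod m × ZMod n, (E v).1 = v.1 := by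
  haveI : NeZero n := ⟨by omega⟩
  have hcancel : ∀ (i : ZMod m) (a b : ZMod n), c i * a = c i * b → a = b := by
    intro i a b hab
    linear_combination cv i * hab - (a - b) * hc i
  have hpar : ∀ (i : ZMod m) (x : ZMod n), (c i * x + e i).val % 2 = x.val % 2 := by
    intro i x
    rw [val_add_mod2 hn2]
    have ha := val_mul_mod2 hn2 (c i) x
    have hmul : ((c i).val * x.val) % 2 = x.val % 2 := by
      rw [Nat.mul_mod, hcodd i, one_mul]
      omega
    have h2 := heev i
    omega
  refine ⟨⟨relabelEquiv c e cv hc, ?_⟩, fun v => rfl⟩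
  intro u v
  obtain ⟨i, x⟩ := u
  obtain ⟨i', y⟩ := v
  show (XaGraph m n k' (fun i => -(k' i)) ℓ').Adj (i, c i * x + e i) (i', c i' * y + e i') ↔
    (XaGraph m n k (fun i => -(k i)) ℓ).Adj (i, x) (i', y)
  rw [xa_adj_iff hm hn hn2 hodd', xa_adj_iff hm hn hn2 hodd,
      factor_adj_iff hm hn hn2 hodd', factor_adj_iff hm hn hn2 hodd]
  dsimp only
  rw [LR_pair, LR_pair, LR_pair, LR_pair]
  constructor
  · rintro (⟨hfib, hcyc⟩ | ⟨hp, hf, hcl⟩ | ⟨hp, hf, hcl⟩)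
    · left
      obtain rfl : i = i' := hfib
      refine ⟨rfl, ?_⟩
      rcases hcyc with h | h <;> rcases hck i with h' | h'
      · left; apply hcancel i; linear_combination h - h'
      · right; apply hcancel i; linear_combination h + h'
      · right; apply hcancel i; linear_combination h + h'
      · left; apply hcancel i; linear_combination h - h'
    · right; left
      have hxp : x.val % 2 = i.val % 2 := by rw [← hpar i x]; exact hp
      refine ⟨hxp, hf, ?_⟩
      obtain rfl : i' = i + 1 := hf
      have hl := hlink i x hxp
      apply hcancel (i + 1)
      linear_combination hcl - hl
    · right; right
      have hyp : y.val % 2 = i'.val % 2 := by rw [← hpar i' y]; exact hp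
      refine ⟨hyp, hf, ?_⟩
      obtain rfl : i = i' + 1 := hf
      have hl := hlink i' y hyp
      apply hcancel (i' + 1)
      linear_combination hcl - hl
  · rintro (⟨hfib, hcyc⟩ | ⟨hp, hf, hcl⟩ | ⟨hp, hf, hcl⟩)
    · left
      obtain rfl : i = i' := hfib
      refine ⟨rfl, ?_⟩
      rcases hcyc with h | h <;> rcases hck i with h' | h'
      · left; linear_combination c i * h + h'
      · right; linear_combination c i * h + h'
      · right; linear_combination c i * h - h'
      · left; linear_combination c i * h - h'
    · right; left
      refine ⟨by rw [hpar]; exact hp, hf, ?_⟩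
      obtain rfl : i' = i + 1 := hf
      have hl := hlink i x hp
      rw [hcl]; exact hl
    · right; right
      refine ⟨by rw [hpar]; exact hp, hf, ?_⟩
      obtain rfl : i = i' + 1 := hf
      have hl := hlink i' y hp
      rw [hcl]; exact hl

end Relabel

section Elements

variable {m n : ℕ} {ℓ : ZMod n} {k : ZMod m → ZMod n}

lemma rotation_to_S1 [NeZero m] (hk0 : k 0 = 1) (hunit : ∀ i, IsUnit (k i))
    {σ : ZMod m → ZMod m} {α : ZMod m → ZMod n}
    (hαk : ∀ i, α i * k i = k (σ i) ∨ α i * k i = -(k (σ i)))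
    (hchain : ∀ i, 2 * α (i + 1) = 2 * α i)
    (hform : ∀ i, σ i = i + 1) :
    ∃ β : ZMod n, IsUnit β ∧
      (∀ i, 2 * k (i + 1) = 2 * (β * k i) ∨ 2 * k (i + 1) = -(2 * (β * k i))) := by
  have hchainC : ∀ i, 2 * α i = 2 * α 0 := chain_const hchain
  refine ⟨α 0, ?_, ?_⟩
  · have h := hαk 0
    rw [hform 0, zero_add, hk0, mul_one] at h
    rcases h with h | h
    · rw [h]; exact hunit 1
    · rw [h]; exact (hunit 1).neg
  · intro i
    have hki := hαk i
    rw [hform i] at hki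
    have h2 : 2 * (α i * k i) = 2 * (α 0 * k i) := by
      have he : 2 * (α i * k i) = (2 * α i) * k i := by ring
      rw [he, hchainC i]; ring
    rcases hki with hki | hki
    · left; linear_combination h2 - 2 * hki
    · right; linear_combination 2 * hki - h2

lemma get_S1 (hm : 3 ≤ m) (hn : 6 ≤ n) (hn2 : n % 2 = 0) (hk0 : k 0 = 1)
    (hodd : ∀ i, (k i).val % 2 = 1) (hunit : ∀ i, IsUnit (k i))
    (G : Subgroup (Equiv.Perm (ZMod m × ZMod n)))
    (hGaut : ∀ g ∈ G, IsAut (XaGraph m n k (fun i => -(k i)) ℓ) g)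
    (hGpres : ∀ g ∈ G, Preserves (XaFactor m n k (fun i => -(k i))) g)
    (hGtrans : ∀ u v : ZMod m × ZMod n, ∃ g ∈ G, g u = v) :
    ∃ β : ZMod n, IsUnit β ∧
      (∀ i, 2 * k (i + 1) = 2 * (β * k i) ∨ 2 * k (i + 1) = -(2 * (β * k i))) ∧
      (2 * k (-1) = 2 * k 1 ∨ 2 * k (-1) = -(2 * k 1)) := by
  haveI : NeZero m := ⟨by omega⟩
  haveI : NeZero n := ⟨by omega⟩
  have h2m : (2 : ZMod m) ≠ 0 := two_nezero_m hm
  have hHiff : ∀ g ∈ G, ∀ u v : ZMod m × ZMod n,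
      (XaFactor m n k (fun i => -(k i))).Adj u v ↔
      (XaFactor m n k (fun i => -(k i))).Adj (g u) (g v) := by
    intro g hg u v
    constructor
    · exact hGpres g hg u v
    · intro hadj
      have := hGpres g⁻¹ (inv_mem hg) _ _ hadj
      simpa using this
  -- the reflection
  obtain ⟨h, hhG, hh0⟩ := hGtrans ((0 : ZMod m), (0 : ZMod n)) ((0 : ZMod m), (1 : ZMod n))
  obtain ⟨σh, αh, dh, hσ0h, hfullh, hαkh, hchainh, hsteph, hinjh⟩ :=
    aut_structure hm hn hn2 hodd hunit h (hGaut h hhG) (hHiff h hhG)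
  have hσh00 : σh 0 = 0 := by rw [hσ0h 0, hh0]
  have hLL0 : LL m n ℓ (0 : ZMod m) = 0 := by
    unfold LL
    rw [if_neg]
    intro hcontra
    have := congrArg ZMod.val hcontra
    rw [ZMod.val_zero, mlast_val hm] at this
    omega
  rcases sigma_shape h2m hinjh hsteph with hplus | hminus
  · exfalso
    have hσid : ∀ i, σh i = i := by
      intro i
      have hf := sigma_plus_formula hplus i
      rw [hσh00] at hf
      rw [hf]; ring
    have hsrc : (XaGraph m n k (fun i => -(k i)) ℓ).Adj ((0 : ZMod m), (0 : ZMod n))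
        ((1 : ZMod m), (0 : ZMod n)) ∧
        ¬ (XaFactor m n k (fun i => -(k i))).Adj ((0 : ZMod m), (0 : ZMod n))
        ((1 : ZMod m), (0 : ZMod n)) := by
      refine (link_iff hm hn hn2 hodd _ _).mpr (Or.inl ⟨?_, ?_, ?_⟩)
      · simp [ZMod.val_zero]
      · show (1 : ZMod m) = 0 + 1; ring
      · show (0 : ZMod n) = 0 + LL m n ℓ 0; rw [hLL0, add_zero]
    have himg : (XaGraph m n k (fun i => -(k i)) ℓ).Adj
          (h ((0 : ZMod m), (0 : ZMod n))) (h ((1 : ZMod m), (0 : ZMod n))) ∧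
        ¬ (XaFactor m n k (fun i => -(k i))).Adj
          (h ((0 : ZMod m), (0 : ZMod n))) (h ((1 : ZMod m), (0 : ZMod n))) :=
      ⟨(hGaut h hhG _ _).mpr hsrc.1, fun hh' => hsrc.2 ((hHiff h hhG _ _).mpr hh')⟩
    have hlr := (link_iff hm hn hn2 hodd _ _).mp himg
    rw [hh0, hfullh 1 0] at hlr
    rw [hσid 1] at hlr
    rcases hlr with ⟨hp, _, _⟩ | ⟨_, hf, _⟩
    · rw [one_val (by omega), ZMod.val_zero] at hp
      omega
    · exact two_nezero_m hm (by linear_combination -hf)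
  · -- reflection established
    have hσneg : ∀ i, σh i = -i := by
      intro i
      have hf := sigma_minus_formula hminus i
      rw [hσh00] at hf
      rw [hf]; ring
    have hα0 : αh 0 = 1 ∨ αh 0 = -1 := by
      have hr := hαkh 0
      rw [hσh00, hk0, mul_one] at hr
      exact hr
    have hch : 2 * αh 1 = 2 * αh 0 := by
      have := hchainh 0
      rwa [zero_add] at this
    have h1 := hαkh 1
    rw [hσneg 1] at h1
    have h2k : 2 * (αh 1 * k 1) = 2 * k 1 ∨ 2 * (αh 1 * k 1) = -(2 * k 1) := by
      have he : 2 * (αh 1 * k 1) = (2 * αh 1) * k 1 := by ring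
      rcases hα0 with ha | ha
      · left; rw [he, hch, ha]; ring
      · right; rw [he, hch, ha]; ring
    have hrefl : 2 * k (-1) = 2 * k 1 ∨ 2 * k (-1) = -(2 * k 1) := by
      rcases h1 with h1 | h1 <;> rcases h2k with hk2 | hk2
      · left; rw [← h1]; exact hk2
      · right; rw [← h1]; exact hk2
      · right; linear_combination 2 * h1 - hk2
      · left; linear_combination 2 * h1 - hk2
    -- the rotation
    obtain ⟨g1, hg1G, hg10⟩ := hGtrans ((0 : ZMod m), (0 : ZMod n)) ((1 : ZMod m), (0 : ZMod n))
    obtain ⟨σ1, α1, d1, hσ01, hfull1, hαk1, hchain1, hstep1, hinj1⟩ :=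
      aut_structure hm hn hn2 hodd hunit g1 (hGaut g1 hg1G) (hHiff g1 hg1G)
    have hσ10 : σ1 0 = 1 := by rw [hσ01 0, hg10]
    rcases sigma_shape h2m hinj1 hstep1 with hplus1 | hminus1
    · have hform : ∀ i, σ1 i = i + 1 := by
        intro i
        have hf := sigma_plus_formula hplus1 i
        rw [hσ10] at hf
        rw [hf]; ring
      obtain ⟨β, hβu, hβ⟩ := rotation_to_S1 hk0 hunit hαk1 hchain1 hform
      exact ⟨β, hβu, hβ, hrefl⟩
    · have hgRG : g1 * h ∈ G := mul_mem hg1G hhG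
      obtain ⟨σR, αR, dR, hσ0R, hfullR, hαkR, hchainR, hstepR, hinjR⟩ :=
        aut_structure hm hn hn2 hodd hunit (g1 * h) (hGaut _ hgRG) (hHiff _ hgRG)
      have hσRform : ∀ i, σR i = i + 1 := by
        intro i
        have hmul : (g1 * h) ((i : ZMod m), (0 : ZMod n)) = g1 (h (i, 0)) := rfl
        have hfin : σ1 (σh i) = i + 1 := by
          rw [hσneg i]
          have hf := sigma_minus_formula hminus1 (-i)
          rw [hσ10] at hf
          rw [hf]; ring
        rw [hσ0R i, hmul, hfullh i 0, hfull1 (σh i) (αh i * 0 + dh i)]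
        exact hfin
      obtain ⟨β, hβu, hβ⟩ := rotation_to_S1 hk0 hunit hαkR hchainR hσRform
      exact ⟨β, hβu, hβ, hrefl⟩

end Elements

section Build

variable {m n : ℕ}

lemma norm_SN' (hn : 3 ≤ n) (hn2 : n % 2 = 0) {x y : ZMod n}
    (hx2 : 2 * x = 2 * y ∨ 2 * x = -(2 * y)) :
    ∃ s η : ZMod n, (η = 0 ∨ η = 1) ∧ (s = y ∨ s = -y) ∧
      x = s + η * ((n / 2 : ℕ) : ZMod n) := by
  rcases hx2 with h | h
  · rcases (two_mul_eq_iff hn hn2).mp h with h' | h'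
    · exact ⟨y, 0, Or.inl rfl, Or.inl rfl, by rw [h']; ring⟩
    · exact ⟨y, 1, Or.inr rfl, Or.inl rfl, by rw [h']; ring⟩
  · have h2 : 2 * x = 2 * (-y) := by linear_combination h
    rcases (two_mul_eq_iff hn hn2).mp h2 with h' | h'
    · exact ⟨-y, 0, Or.inl rfl, Or.inr rfl, by rw [h']; ring⟩
    · exact ⟨-y, 1, Or.inr rfl, Or.inr rfl, by rw [h']; ring⟩

lemma dec_step (hn : 6 ≤ n) (hn2 : n % 2 = 0) {x y : ZMod n}
    (hxodd : x.val % 2 = 1) (hyodd : y.val % 2 = 1)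
    (hx2 : 2 * x = 2 * y ∨ 2 * x = -(2 * y)) :
    ∃ η : ZMod n, (η = 0 ∨ η = 1) ∧ ((n / 2) % 2 = 1 → η = 0) ∧
      ((1 + η * ((n / 2 : ℕ) : ZMod n)) * x = y ∨
        (1 + η * ((n / 2 : ℕ) : ZMod n)) * x = -y) := by
  haveI : NeZero n := ⟨by omega⟩
  set N : ZMod n := ((n / 2 : ℕ) : ZMod n) with hN
  have h2N : (2 : ZMod n) * N = 0 := two_mul_half hn2
  have hNval : N.val = n / 2 := half_val (by omega)
  obtain ⟨s, η, hη, hs, hxe⟩ := norm_SN' (by omega) hn2 hx2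
  have hsodd : s.val % 2 = 1 := by
    rcases hs with rfl | rfl
    · exact hyodd
    · rw [val_neg_mod2 hn2]; exact hyodd
  by_cases hNo : (n / 2) % 2 = 1
  · have hη0 : η = 0 := by
      rcases hη with rfl | rfl
      · rfl
      · exfalso
        rw [hxe, val_add_mod2 hn2, one_mul, hNval] at hxodd
        omega
    refine ⟨0, Or.inl rfl, fun _ => rfl, ?_⟩
    rw [hη0] at hxe
    rcases hs with rfl | rfl
    · left; rw [hxe]; ring
    · right; rw [hxe]; ring
  · have hNev : (n / 2) % 2 = 0 := by omega
    have hNN : N * N = 0 := mul_half_of_even hn2 (by rw [hNval]; exact hNev)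
    have hsN : s * N = N := mul_half_of_odd hn2 hsodd
    refine ⟨η, hη, fun hcon => absurd hcon (by omega), ?_⟩
    rcases hη with rfl | rfl
    · rw [hxe]
      rcases hs with rfl | rfl
      · left; ring
      · right; ring
    · rw [hxe]
      rcases hs with rfl | rfl
      · left; linear_combination hsN + h2N + hNN
      · right; linear_combination hsN + h2N + hNN

lemma mul_parity_rep (hn : 6 ≤ n) (hn2 : n % 2 = 0) {x : ZMod n} (hx : 2 * x = 0)
    (j : ZMod n) : x * j = x * ((j.val % 2 : ℕ) : ZMod n) := by
  haveI : NeZero n := ⟨by omega⟩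
  have hj : j = 2 * ((j.val / 2 : ℕ) : ZMod n) + ((j.val % 2 : ℕ) : ZMod n) := by
    have h : ((j.val : ℕ) : ZMod n) = ((2 * (j.val / 2) + j.val % 2 : ℕ) : ZMod n) := by
      congr 1; omega
    rw [cast_val_eq] at h
    push_cast at h
    exact_mod_cast h
  conv_lhs => rw [hj]
  linear_combination ((j.val / 2 : ℕ) : ZMod n) * hx

lemma interior_succ_val (hm : 3 ≤ m) {i : ZMod m} (hi : i ≠ ((m - 1 : ℕ) : ZMod m)) :
    (i + 1).val = i.val + 1 := by
  haveI : NeZero m := ⟨by omega⟩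
  have h1 : i.val < m := ZMod.val_lt i
  have h2 : i.val ≠ m - 1 := by
    intro h
    exact hi (by rw [← cast_val_eq i, h])
  have h3 : ((i.val + 1 : ℕ) : ZMod m) = i + 1 := by
    push_cast
    rw [cast_val_eq]
  rw [← h3, ZMod.val_cast_of_lt (by omega)]

lemma build_iso (hm : 3 ≤ m) (hn : 6 ≤ n) (hn2 : n % 2 = 0)
    (k k' : ZMod m → ZMod n) (ℓ : ZMod n)
    (hodd : ∀ i, (k i).val % 2 = 1) (hodd' : ∀ i, (k' i).val % 2 = 1)
    (η : ZMod m → ZMod n) (hη01 : ∀ i, η i = 0 ∨ η i = 1)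
    (hηodd : ∀ i, (n / 2) % 2 = 1 → η i = 0)
    (hck : ∀ i, (1 + η i * ((n / 2 : ℕ) : ZMod n)) * k i = k' i ∨
      (1 + η i * ((n / 2 : ℕ) : ZMod n)) * k i = -(k' i)) :
    ∃ ℓ' : ZMod n, ∃ E : XaGraph m n k (fun i => -(k i)) ℓ ≃g
        XaGraph m n k' (fun i => -(k' i)) ℓ',
      ∀ v : ZMod m × ZMod n, (E v).1 = v.1 := by
  haveI : NeZero n := ⟨by omega⟩
  haveI : NeZero m := ⟨by omega⟩
  set N : ZMod n := ((n / 2 : ℕ) : ZMod n) with hN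
  have h2N : (2 : ZMod n) * N = 0 := two_mul_half hn2
  have hNval : N.val = n / 2 := half_val (by omega)
  by_cases hNo : (n / 2) % 2 = 1
  · -- all η are 0 : trivial relabelling c = 1, e = 0, ℓ' = ℓ
    have hck' : ∀ i, (1 : ZMod n) * k i = k' i ∨ (1 : ZMod n) * k i = -(k' i) := by
      intro i
      have h := hck i
      rw [hηodd i hNo] at h
      rcases h with h | h
      · left; linear_combination h
      · right; linear_combination h
    refine ⟨ℓ, ?_⟩
    have hone : ∀ i : ZMod m, ((fun (_ : ZMod m) => (1 : ZMod n)) i).val % 2 = 1 := by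
      intro i
      show (1 : ZMod n).val % 2 = 1
      rw [one_val (show 2 ≤ n by omega)]
    have hzero : ∀ i : ZMod m, ((fun (_ : ZMod m) => (0 : ZMod n)) i).val % 2 = 0 := by
      intro i
      show (0 : ZMod n).val % 2 = 0
      rw [ZMod.val_zero]
    apply relabel_iso hm hn hn2 k k' ℓ ℓ hodd hodd' (fun _ => 1) (fun _ => 0) (fun _ => 1)
      (fun i => by ring) hone hzero hck'
    intro i j _
    ring
  · -- N is even
    have hNev : (n / 2) % 2 = 0 := by omega
    have hNN : N * N = 0 := mul_half_of_even hn2 (by rw [hNval]; exact hNev)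
    set c : ZMod m → ZMod n := fun i => 1 + η i * N with hcdef
    have hcc : ∀ i, c i * c i = 1 := by
      intro i
      rcases hη01 i with h | h
      · simp only [hcdef, h]; ring
      · simp only [hcdef, h]; linear_combination h2N + hNN
    have hcodd : ∀ i, (c i).val % 2 = 1 := by
      intro i
      rcases hη01 i with h | h
      · simp only [hcdef, h, zero_mul, add_zero]
        rw [one_val (show 2 ≤ n by omega)]
      · simp only [hcdef, h, one_mul]
        rw [val_add_mod2 hn2, one_val (show 2 ≤ n by omega), hNval]
        omega
    have hc2 : ∀ a b : ZMod m, 2 * (c a - c b) = 0 := by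
      intro a b
      simp only [hcdef]
      linear_combination (η a - η b) * h2N
    -- the translation part
    set E : ℕ → ZMod n := fun t => Nat.rec (0 : ZMod n)
      (fun s Es => Es - (c (((s + 1 : ℕ)) : ZMod m) - c ((s : ℕ) : ZMod m)) *
        ((s % 2 : ℕ) : ZMod n)) t with hE
    have hE0 : E 0 = 0 := rfl
    have hEs : ∀ t, E (t + 1) = E t - (c (((t + 1 : ℕ)) : ZMod m) - c ((t : ℕ) : ZMod m)) *
        ((t % 2 : ℕ) : ZMod n) := fun t => rfl
    have hEval : ∀ t, E t = 0 ∨ E t = N := by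
      intro t
      induction t with
      | zero => exact Or.inl hE0
      | succ s ih =>
        rw [hEs s]
        have hD : c (((s + 1 : ℕ)) : ZMod m) - c ((s : ℕ) : ZMod m) = 0 ∨
            c (((s + 1 : ℕ)) : ZMod m) - c ((s : ℕ) : ZMod m) = N :=
          two_mul_eq_zero (by omega) hn2 (hc2 _ _)
        have hP : ((s % 2 : ℕ) : ZMod n) = 0 ∨ ((s % 2 : ℕ) : ZMod n) = 1 := by
          rcases Nat.mod_two_eq_zero_or_one s with h | h <;> rw [h]
          · left; exact Nat.cast_zero
          · right; exact Nat.cast_one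
        rcases ih with h0 | h0 <;> rcases hD with hD | hD <;> rcases hP with hP | hP <;>
          rw [h0, hD, hP]
        · left; ring
        · left; ring
        · left; ring
        · right; linear_combination -h2N
        · right; ring
        · right; ring
        · right; ring
        · left; ring
    set e : ZMod m → ZMod n := fun i => E i.val with hedef
    have heev : ∀ i, (e i).val % 2 = 0 := by
      intro i
      rcases hEval i.val with h | h
      · simp only [hedef, h, ZMod.val_zero, Nat.zero_mod]
      · simp only [hedef, h, hNval]
        omega
    -- choice of ℓ'
    set ml : ZMod m := ((m - 1 : ℕ) : ZMod m) with hml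
    set ℓ' : ZMod n := c 0 * ℓ + e 0 + (c 0 - c ml) * (((m - 1) % 2 : ℕ) : ZMod n) - e ml
      with hℓ'
    refine ⟨ℓ', ?_⟩
    apply relabel_iso hm hn hn2 k k' ℓ ℓ' hodd hodd' c e c hcc hcodd heev
      (fun i => by
        have h := hck i
        exact h)
    -- the link condition
    intro i j hj
    by_cases hi : i = ml
    · -- seam
      have hL1 : LL m n ℓ i = ℓ := by rw [hi]; unfold LL; rw [if_pos rfl]
      have hL2 : LL m n ℓ' i = ℓ' := by rw [hi]; unfold LL; rw [if_pos rfl]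
      have hi1 : i + 1 = 0 := by rw [hi]; exact mlast_add_one hm
      have hjv : ((j.val % 2 : ℕ) : ZMod n) = (((m - 1) % 2 : ℕ) : ZMod n) := by
        rw [hj, hi]
        rw [mlast_val hm]
      have hrep := mul_parity_rep hn hn2 (hc2 0 ml) j
      rw [hjv] at hrep
      rw [hL1, hL2, hi1, hℓ']
      rw [hi]
      linear_combination hrep
    · -- interior
      have hL1 : LL m n ℓ i = 0 := by unfold LL; rw [if_neg hi]
      have hL2 : LL m n ℓ' i = 0 := by unfold LL; rw [if_neg hi]
      have hiv : (i + 1).val = i.val + 1 := interior_succ_val hm hi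
      have he1 : e (i + 1) = e i - (c (i + 1) - c i) * ((i.val % 2 : ℕ) : ZMod n) := by
        simp only [hedef, hiv]
        rw [hEs i.val]
        have hc1 : (((i.val + 1 : ℕ)) : ZMod m) = i + 1 := by
          push_cast
          rw [cast_val_eq]
        have hc0 : ((i.val : ℕ) : ZMod m) = i := cast_val_eq i
        rw [hc1, hc0]
      have hrep := mul_parity_rep hn hn2 (hc2 (i + 1) i) j
      have hjv : ((j.val % 2 : ℕ) : ZMod n) = ((i.val % 2 : ℕ) : ZMod n) := by rw [hj]
      rw [hjv] at hrep
      rw [hL1, hL2, he1]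
      linear_combination hrep

end Build

/-- relabelling the cycles yields `HTG(m,n,ℓ')` or `X_a(m,n,[1,k,…,1,k],ℓ')`. -/
theorem statement8 (m n : ℕ) (k : ZMod m → ZMod n) (ℓ : ZMod n)
    (hA : AssumptionA m n k ℓ) :
    (∃ (ℓ' : ZMod n) (e : XaGraph m n k (fun i => -(k i)) ℓ ≃g HTG m n ℓ'),
      ∀ v : ZMod m × ZMod n, (e v).1 = v.1) ∨
    (m % 2 = 0 ∧ ∃ (ℓ' k' : ZMod n), k'.val % 2 = 1 ∧ 2 * k' ≠ 2 ∧ 2 * k' ≠ -2 ∧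
      (2 * k' ^ 2 = 2 ∨ 2 * k' ^ 2 = -2) ∧
      ∃ e : XaGraph m n k (fun i => -(k i)) ℓ ≃g XaK m n k' ℓ',
        ∀ v : ZMod m × ZMod n, (e v).1 = v.1) := by
  obtain ⟨hm, hn, hn2, hl, hk0, hcop, G, hGaut, hGpres, hGtrans⟩ := hA
  haveI : NeZero n := ⟨by omega⟩
  haveI : NeZero m := ⟨by omega⟩
  have hunit : ∀ i, IsUnit (k i) := fun i => isUnit_of_coprime_val _ (hcop i)
  have hodd : ∀ i, (k i).val % 2 = 1 := fun i => unit_val_odd hn2 (hunit i)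
  obtain ⟨β, hβu, hS1, hrefl⟩ := get_S1 hm hn hn2 hk0 hodd hunit G hGaut hGpres hGtrans
  have hb2 := beta_squared hn hn2 hk0 hS1 hrefl
  have NF := normal_form hn hn2 hk0 hS1 hb2
  have h2N : (2 : ZMod n) * ((n / 2 : ℕ) : ZMod n) = 0 := two_mul_half hn2
  have hNF2 : ∀ i : ZMod m, 2 * k i = 2 * β ^ (i.val % 2) ∨
      2 * k i = -(2 * β ^ (i.val % 2)) := by
    intro i
    obtain ⟨s, η, hs, hη, hkeq⟩ := NF i.val
    rw [cast_val_eq] at hkeq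
    rcases hs with rfl | rfl
    · left; rw [hkeq]
      rcases hη with rfl | rfl
      · ring
      · linear_combination h2N
    · right; rw [hkeq]
      rcases hη with rfl | rfl
      · ring
      · linear_combination h2N
  by_cases hβ2 : 2 * β = 2 ∨ 2 * β = -2
  · -- Case A : relabelling to HTG
    left
    have h2ki : ∀ i : ZMod m, 2 * k i = 2 * (1 : ZMod n) ∨
        2 * k i = -(2 * (1 : ZMod n)) := by
      intro i
      have h := hNF2 i
      rcases Nat.mod_two_eq_zero_or_one i.val with hp | hp <;> rw [hp] at h
      · rw [pow_zero] at h; exact h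
      · rw [pow_one] at h
        rcases h with h | h <;> rcases hβ2 with hb | hb
        · left; linear_combination h + hb
        · right; linear_combination h + hb
        · right; linear_combination h - hb
        · left; linear_combination h - hb
    have hone_odd : ((1 : ZMod n)).val % 2 = 1 := by rw [one_val (by omega)]
    have hdec : ∀ i : ZMod m, ∃ η : ZMod n, (η = 0 ∨ η = 1) ∧ ((n / 2) % 2 = 1 → η = 0) ∧
        ((1 + η * ((n / 2 : ℕ) : ZMod n)) * k i = (1 : ZMod n) ∨
          (1 + η * ((n / 2 : ℕ) : ZMod n)) * k i = -(1 : ZMod n)) :=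
      fun i => dec_step hn hn2 (hodd i) hone_odd (h2ki i)
    choose η hη01 hηodd hck using hdec
    have hodd1 : ∀ i : ZMod m, ((fun (_ : ZMod m) => (1 : ZMod n)) i).val % 2 = 1 :=
      fun _ => hone_odd
    obtain ⟨ℓ', E, hE⟩ := build_iso hm hn hn2 k (fun _ => (1 : ZMod n)) ℓ hodd hodd1
      η hη01 hηodd hck
    exact ⟨ℓ', E, hE⟩
  · -- Case B : relabelling to XaK
    right
    have hm2 : m % 2 = 0 := by
      rcases Nat.mod_two_eq_zero_or_one m with h | h
      · exact h
      · exact absurd (m_odd_beta hm hn hn2 hk0 hS1 hb2 h) hβ2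
    push_neg at hβ2
    refine ⟨hm2, ?_⟩
    have hβodd : β.val % 2 = 1 := unit_val_odd hn2 hβu
    have hksig : ∀ i : ZMod m, kSig m n β i = β ^ (i.val % 2) := by
      intro i
      show (if i.val % 2 = 0 then (1 : ZMod n) else β) = β ^ (i.val % 2)
      rcases Nat.mod_two_eq_zero_or_one i.val with hp | hp
      · rw [if_pos hp, hp, pow_zero]
      · rw [if_neg (by omega), hp, pow_one]
    have hsig_odd : ∀ i, (kSig m n β i).val % 2 = 1 := by
      intro i
      rw [hksig i]
      rcases Nat.mod_two_eq_zero_or_one i.val with hp | hp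
      · rw [hp, pow_zero, one_val (by omega)]
      · rw [hp, pow_one]; exact hβodd
    have h2ki : ∀ i : ZMod m, 2 * k i = 2 * kSig m n β i ∨
        2 * k i = -(2 * kSig m n β i) := by
      intro i
      rw [hksig i]
      exact hNF2 i
    have hdec : ∀ i : ZMod m, ∃ η : ZMod n, (η = 0 ∨ η = 1) ∧ ((n / 2) % 2 = 1 → η = 0) ∧
        ((1 + η * ((n / 2 : ℕ) : ZMod n)) * k i = kSig m n β i ∨
          (1 + η * ((n / 2 : ℕ) : ZMod n)) * k i = -(kSig m n β i)) :=
      fun i => dec_step hn hn2 (hodd i) (hsig_odd i) (h2ki i)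
    choose η hη01 hηodd hck using hdec
    obtain ⟨ℓ', E, hE⟩ := build_iso hm hn hn2 k (kSig m n β) ℓ hodd hsig_odd η hη01 hηodd hck
    exact ⟨ℓ', β, hβodd, hβ2.1, hβ2.2, hb2, E, hE⟩
end CubicFIG
end
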